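/- arXiv:2205.09155 — 10 statements merged into one kernel-verified Lean document; each statement's English description precedes it below -/
import Mathlib

section
/- Let A and B be nonempty, disjoint, closed subsets of the Euclidean plane ℝ². Then the Hausdorff dimension of the equidistant set E(A,B) is exactly 1. -/
open Metric Set MeasureTheory

/-- The equidistant set determined by two subsets of a metric space. -/
def equidistantSet {X : Type*} [MetricSpace X] (A B : Set X) : Set X :=
  {x | Metric.infDist x A = Metric.infDist x B}

/-!
Let `x, y` be equidistant points with nearest points `aₓ, a_y ∈ A` and `bₓ, b_y ∈ B`. Comparing
`|x - aₓ| ≤ |x - b_y|` with `|y - b_y| ≤ |y - aₓ|` gives `⟪x - y, aₓ - b_y⟫ ≥ 0`, and likewise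
`⟪y - x, a_y - bₓ⟫ ≥ 0`. So if the nearest points in `A` lie within `δ` of a point `c` and those
in `B` within `δ` of `c'`, where `|c - c'| ≥ 4δ`, then `x - y` is almost orthogonal to `c - c'`,
and the orthogonal projection onto the hyperplane `(c - c')ᗮ` has a Lipschitz inverse on such
points. Countably many of these pieces cover the equidistant set, whence `dimH ≤ n - 1` in
dimension `n`.

Conversely, for `a ∈ A` and `b ∈ B`, every line parallel to `b - a` passing close to `a` also
passes close to `b`, so it meets the equidistant set by the intermediate value theorem. The
projection of the equidistant set onto `(b - a)ᗮ` thus contains a ball, whence `dimH ≥ n - 1`.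
-/

open Module
open scoped RealInnerProductSpace NNReal ENNReal

theorem dimH_le_dimH_image_of_dist_le_mul {X Y : Type*} [MetricSpace X] [MetricSpace Y]
    {s : Set X} {f : X → Y} {K : ℝ≥0} (h : ∀ x ∈ s, ∀ y ∈ s, dist x y ≤ K * dist (f x) (f y)) :
    dimH s ≤ dimH (f '' s) := by
  have hf : AntilipschitzWith K (s.domRestrict f) :=
    AntilipschitzWith.of_le_mul_dist fun x y => h x.1 x.2 y.1 y.2
  calc dimH s = dimH ((Subtype.val : s → X) '' univ) := by rw [Subtype.coe_image_univ]
    _ = dimH (univ : Set s) := isometry_subtype_coe.dimH_image univ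
    _ ≤ dimH (s.domRestrict f '' univ) := hf.le_dimH_image univ
    _ = dimH (f '' s) := by rw [image_univ, range_domRestrict]

section MetricSpace

variable {X : Type*} [MetricSpace X] {A B : Set X}

theorem infDist_lt_infDist_of_two_mul_dist_lt {a z : X} (ha : a ∈ A)
    (h : 2 * dist z a < infDist a B) : infDist z A < infDist z B := by
  have hzA : infDist z A ≤ dist z a := infDist_le_dist_of_mem ha
  have haB : infDist a B ≤ infDist z B + dist a z := infDist_le_infDist_add_dist
  rw [dist_comm] at haB
  linarith

theorem IsPreconnected.inter_equidistantSet_nonempty {S : Set X} (hS : IsPreconnected S)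
    {p q : X} (hp : p ∈ S) (hq : q ∈ S) (hpA : infDist p A ≤ infDist p B)
    (hqB : infDist q B ≤ infDist q A) : (S ∩ equidistantSet A B).Nonempty :=
  hS.intermediate_value₂ hp hq (continuous_infDist_pt A).continuousOn
    (continuous_infDist_pt B).continuousOn hpA hqB

/-- The two inequalities force `infDist x A = dist x a = infDist x B = dist x b`: this is the set
of equidistant points having a nearest point of `A` near `c` and one of `B` near `c'`. -/
def equidistantPiece (A B : Set X) (c c' : X) (δ : ℝ) : Set X :=
  {x | ∃ a ∈ A, ∃ b ∈ B, dist a c < δ ∧ dist b c' < δ ∧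
    dist x a ≤ infDist x B ∧ dist x b ≤ infDist x A}

theorem equidistantSet_subset_iUnion_equidistantPiece [ProperSpace X]
    (hA : A.Nonempty) (hB : B.Nonempty) (hAB : Disjoint A B) (hAc : IsClosed A)
    (hBc : IsClosed B) {D : Set X} (hD : Dense D) :
    equidistantSet A B ⊆ ⋃ (n : ℕ) (c ∈ D) (c' ∈ D) (_ : 4 * (1 / (n + 1 : ℝ)) ≤ dist c c'),
      equidistantPiece A B c c' (1 / (n + 1)) := by
  intro x hx
  obtain ⟨a, ha, hxa⟩ := hAc.exists_infDist_eq_dist hA x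
  obtain ⟨b, hb, hxb⟩ := hBc.exists_infDist_eq_dist hB x
  have hab : 0 < dist a b := dist_pos.mpr fun h => disjoint_left.mp hAB ha (h ▸ hb)
  obtain ⟨n, hn⟩ := exists_nat_one_div_lt (div_pos hab (by norm_num : (0 : ℝ) < 6))
  have hδ : (0 : ℝ) < 1 / (n + 1) := Nat.one_div_pos_of_nat
  obtain ⟨c, hcD, hac⟩ := hD.exists_dist_lt a hδ
  obtain ⟨c', hc'D, hbc'⟩ := hD.exists_dist_lt b hδ
  have hcc' : 4 * (1 / (n + 1 : ℝ)) ≤ dist c c' := by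
    have := dist_triangle4 a c c' b
    rw [dist_comm c' b] at this
    linarith
  simp only [mem_iUnion]
  exact ⟨n, c, hcD, c', hc'D, hcc', a, ha, b, hb, hac, hbc', (hxa.symm.trans hx).le,
    (hxb.symm.trans hx.symm).le⟩

end MetricSpace

section InnerProductSpace

variable {E : Type*} [NormedAddCommGroup E] [InnerProductSpace ℝ E]

theorem inner_sub_sub_nonneg_of_dist_le {x y a b : E} (hx : dist x a ≤ dist x b)
    (hy : dist y b ≤ dist y a) : 0 ≤ ⟪x - y, a - b⟫ := by
  rw [dist_eq_norm, dist_eq_norm] at hx hy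
  have key : ‖x - b‖ ^ 2 - ‖x - a‖ ^ 2 + ‖y - a‖ ^ 2 - ‖y - b‖ ^ 2 = 2 * ⟪x - y, a - b⟫ := by
    simp only [norm_sub_sq_real, inner_sub_left, inner_sub_right]
    ring
  nlinarith [norm_nonneg (x - a), norm_nonneg (y - b)]

theorem norm_le_norm_orthogonalProjectionOnto_orthogonal_add (v z : E) :
    ‖z‖ ≤ ‖(ℝ ∙ v)ᗮ.orthogonalProjectionOnto z‖ + |⟪v, z⟫| / ‖v‖ := by
  have hproj : ‖(ℝ ∙ v).starProjection z‖ = |⟪v, z⟫| / ‖v‖ := by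
    rcases eq_or_ne v 0 with rfl | hv
    · simp
    have hv' : ‖v‖ ≠ 0 := norm_ne_zero_iff.mpr hv
    rw [Submodule.starProjection_singleton, norm_smul, Real.norm_eq_abs, abs_div]
    simp only [RCLike.ofReal_real_eq_id, id, abs_pow, abs_norm]
    field_simp
  calc ‖z‖ = ‖(ℝ ∙ v).starProjection z + (ℝ ∙ v)ᗮ.starProjection z‖ := by
        rw [Submodule.starProjection_add_starProjection_orthogonal]
    _ ≤ ‖(ℝ ∙ v).starProjection z‖ + ‖(ℝ ∙ v)ᗮ.starProjection z‖ := norm_add_le _ _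
    _ = _ := by rw [hproj, add_comm, Submodule.starProjection_apply, Submodule.coe_norm]

theorem finrank_orthogonal_span_singleton_eq_sub_one [FiniteDimensional ℝ E] {v : E}
    (hv : v ≠ 0) : finrank ℝ (ℝ ∙ v)ᗮ = finrank ℝ E - 1 := by
  have := (ℝ ∙ v).finrank_add_finrank_orthogonal
  rw [finrank_span_singleton hv] at this
  omega

theorem abs_inner_sub_le_of_mem_equidistantPiece {A B : Set E} {c c' : E} {δ : ℝ} {x y : E}
    (hx : x ∈ equidistantPiece A B c c' δ) (hy : y ∈ equidistantPiece A B c c' δ) :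
    |⟪c - c', x - y⟫| ≤ 2 * δ * ‖x - y‖ := by
  obtain ⟨ax, hax, bx, hbx, haxc, hbxc, hxa, hxb⟩ := hx
  obtain ⟨ay, hay, by', hby, hayc, hbyc, hya, hyb⟩ := hy
  have perturb : ∀ {z a b : E}, dist a c < δ → dist b c' < δ →
      ⟪z, a - b⟫ ≤ ⟪z, c - c'⟫ + 2 * δ * ‖z‖ := by
    intro z a b ha hb
    have hsplit : ⟪z, a - b⟫ = ⟪z, c - c'⟫ + ⟪z, (a - c) - (b - c')⟫ := by
      rw [← inner_add_right]; congr 1; abel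
    have herr : ‖(a - c) - (b - c')‖ ≤ 2 * δ := by
      rw [dist_eq_norm] at ha hb
      linarith [norm_sub_le (a - c) (b - c')]
    have := real_inner_le_norm z ((a - c) - (b - c'))
    nlinarith [norm_nonneg z]
  have h₁ : 0 ≤ ⟪x - y, ax - by'⟫ := inner_sub_sub_nonneg_of_dist_le
    (hxa.trans (infDist_le_dist_of_mem hby)) (hyb.trans (infDist_le_dist_of_mem hax))
  have h₂ : 0 ≤ ⟪y - x, ay - bx⟫ := inner_sub_sub_nonneg_of_dist_le
    (hya.trans (infDist_le_dist_of_mem hbx)) (hxb.trans (infDist_le_dist_of_mem hay))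
  have h₁' := perturb (z := x - y) haxc hbyc
  have h₂' := perturb (z := y - x) hayc hbxc
  have hflip : ⟪y - x, c - c'⟫ = -⟪x - y, c - c'⟫ := by rw [← inner_neg_left, neg_sub]
  rw [hflip, norm_sub_rev] at h₂'
  rw [real_inner_comm, abs_le]
  constructor <;> linarith

theorem dimH_equidistantPiece_le [FiniteDimensional ℝ E] (A B : Set E) {c c' : E} {δ : ℝ}
    (hδ : 0 < δ) (hcc' : 4 * δ ≤ dist c c') :
    dimH (equidistantPiece A B c c' δ) ≤ (finrank ℝ E - 1 : ℕ) := by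
  set P := (ℝ ∙ (c - c'))ᗮ.orthogonalProjectionOnto
  have hv : c - c' ≠ 0 := sub_ne_zero.mpr (dist_pos.mp (by linarith))
  have hanti : ∀ x ∈ equidistantPiece A B c c' δ, ∀ y ∈ equidistantPiece A B c c' δ,
      dist x y ≤ (2 : ℝ≥0) * dist (P x) (P y) := by
    intro x hx y hy
    have hinner := abs_inner_sub_le_of_mem_equidistantPiece hx hy
    have hsmall : |⟪c - c', x - y⟫| / ‖c - c'‖ ≤ ‖x - y‖ / 2 := by
      rw [← dist_eq_norm c c', div_le_iff₀ (by linarith)]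
      nlinarith [norm_nonneg (x - y)]
    have := norm_le_norm_orthogonalProjectionOnto_orthogonal_add (c - c') (x - y)
    rw [dist_eq_norm, dist_eq_norm, ← map_sub]
    push_cast
    linarith
  calc dimH (equidistantPiece A B c c' δ) ≤ dimH (P '' equidistantPiece A B c c' δ) :=
        dimH_le_dimH_image_of_dist_le_mul hanti
    _ ≤ dimH (univ : Set (ℝ ∙ (c - c'))ᗮ) := dimH_mono (subset_univ _)
    _ = (finrank ℝ E - 1 : ℕ) := by
        rw [Real.dimH_univ_eq_finrank, finrank_orthogonal_span_singleton_eq_sub_one hv]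

theorem dimH_equidistantSet_le [FiniteDimensional ℝ E] {A B : Set E} (hA : A.Nonempty)
    (hB : B.Nonempty) (hAB : Disjoint A B) (hAc : IsClosed A) (hBc : IsClosed B) :
    dimH (equidistantSet A B) ≤ (finrank ℝ E - 1 : ℕ) := by
  obtain ⟨D, hDc, hD⟩ := TopologicalSpace.exists_countable_dense E
  refine (dimH_mono (equidistantSet_subset_iUnion_equidistantPiece hA hB hAB hAc hBc hD)).trans ?_
  simp only [dimH_iUnion, dimH_bUnion hDc, iSup_le_iff]
  exact fun n c _ c' _ hcc' => dimH_equidistantPiece_le A B Nat.one_div_pos_of_nat hcc'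

theorem ball_subset_image_equidistantSet {A B : Set E} {a b : E} (ha : a ∈ A) (hb : b ∈ B)
    {δ : ℝ} (haB : 2 * δ ≤ infDist a B) (hbA : 2 * δ ≤ infDist b A) :
    ball ((ℝ ∙ (b - a))ᗮ.orthogonalProjectionOnto a) δ ⊆
      (ℝ ∙ (b - a))ᗮ.orthogonalProjectionOnto '' equidistantSet A B := by
  set P := (ℝ ∙ (b - a))ᗮ.orthogonalProjectionOnto
  intro w hw
  set h : E := ((w - P a : (ℝ ∙ (b - a))ᗮ) : E)
  have hh : ‖h‖ < δ := by rwa [mem_ball, dist_eq_norm] at hw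
  set γ : ℝ → E := fun t => a + h + t • (b - a)
  have hγ0 : γ 0 = a + h := by simp [γ]
  have hγ1 : γ 1 = b + h := by simp only [γ, one_smul]; abel
  have hA0 : infDist (γ 0) A ≤ infDist (γ 0) B := by
    refine (infDist_lt_infDist_of_two_mul_dist_lt ha ?_).le
    rw [hγ0, dist_eq_norm, add_sub_cancel_left]
    linarith
  have hB1 : infDist (γ 1) B ≤ infDist (γ 1) A := by
    refine (infDist_lt_infDist_of_two_mul_dist_lt hb ?_).le
    rw [hγ1, dist_eq_norm, add_sub_cancel_left]
    linarith
  obtain ⟨_, ⟨t, rfl⟩, hE⟩ :=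
    (isPreconnected_range (by fun_prop : Continuous γ)).inter_equidistantSet_nonempty
      (mem_range_self 0) (mem_range_self 1) hA0 hB1
  have hPh : P h = w - P a := Submodule.orthogonalProjectionOnto_mem_subspace_eq_self _
  have hPba : P (b - a) = 0 :=
    Submodule.orthogonalProjectionOnto_orthogonalComplement_singleton_eq_zero _
  refine ⟨γ t, hE, ?_⟩
  simp only [γ, map_add, map_smul, hPh, hPba, smul_zero, add_zero, add_sub_cancel]

theorem le_dimH_equidistantSet [FiniteDimensional ℝ E] {A B : Set E} (hA : A.Nonempty)
    (hB : B.Nonempty) (hAB : Disjoint A B) (hAc : IsClosed A) (hBc : IsClosed B) :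
    ((finrank ℝ E - 1 : ℕ) : ℝ≥0∞) ≤ dimH (equidistantSet A B) := by
  obtain ⟨a, ha⟩ := hA
  obtain ⟨b, hb⟩ := hB
  have hb_notMem : b ∉ A := disjoint_right.mp hAB hb
  have haB : 0 < infDist a B := (hBc.notMem_iff_infDist_pos ⟨b, hb⟩).mp (disjoint_left.mp hAB ha)
  have hbA : 0 < infDist b A := (hAc.notMem_iff_infDist_pos ⟨a, ha⟩).mp hb_notMem
  have hba : b - a ≠ 0 := sub_ne_zero.mpr fun h => hb_notMem (h ▸ ha)
  obtain ⟨δ, hδ, haδ, hbδ⟩ : ∃ δ > 0, 2 * δ ≤ infDist a B ∧ 2 * δ ≤ infDist b A :=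
    ⟨min (infDist a B) (infDist b A) / 2, by positivity,
      by linarith [min_le_left (infDist a B) (infDist b A)],
      by linarith [min_le_right (infDist a B) (infDist b A)]⟩
  set P := (ℝ ∙ (b - a))ᗮ.orthogonalProjectionOnto
  calc ((finrank ℝ E - 1 : ℕ) : ℝ≥0∞) = dimH (ball (P a) δ) := by
        rw [Real.dimH_of_nonempty_interior (by rwa [isOpen_ball.interior_eq, nonempty_ball]),
          finrank_orthogonal_span_singleton_eq_sub_one hba]
    _ ≤ dimH (P '' equidistantSet A B) :=
        dimH_mono (ball_subset_image_equidistantSet ha hb haδ hbδ)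
    _ ≤ dimH (equidistantSet A B) := P.lipschitz.dimH_image_le _

theorem dimH_equidistantSet_eq_finrank_sub_one [FiniteDimensional ℝ E] {A B : Set E}
    (hA : A.Nonempty) (hB : B.Nonempty) (hAB : Disjoint A B) (hAc : IsClosed A)
    (hBc : IsClosed B) : dimH (equidistantSet A B) = (finrank ℝ E - 1 : ℕ) :=
  le_antisymm (dimH_equidistantSet_le hA hB hAB hAc hBc)
    (le_dimH_equidistantSet hA hB hAB hAc hBc)

end InnerProductSpace

/-- If `A` and `B` are nonempty, disjoint, closed subsets of the Euclidean plane, then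
the Hausdorff dimension of the equidistant set `E(A,B)` is exactly `1`. -/
theorem dimH_equidistantSet
    (A B : Set (EuclideanSpace ℝ (Fin 2)))
    (hA : A.Nonempty) (hB : B.Nonempty) (hAB : Disjoint A B)
    (hAc : IsClosed A) (hBc : IsClosed B) :
    dimH (equidistantSet A B) = 1 := by
  rw [dimH_equidistantSet_eq_finrank_sub_one hA hB hAB hAc hBc, finrank_euclideanSpace_fin]
  norm_num
end

section
/- Let X be a proper geodesic metric space with no branching geodesics, let A and B be nonempty disjoint closed subsets of X, and let x ∈ E(A,B). If γ : [0,T] → X is a unit-speed shortest path from x to A (so γ(0) = x, γ(T) ∈ A, T = dist(x,A), and d(γ(s),γ(t)) = |s−t| for all s,t ∈ [0,T]), then dist(γ(t),A) < dist(γ(t),B) for all t ∈ (0,T]. -/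
open Metric Set

/-- A unit-speed shortest path defined on `[0, T]`:
`d(γ s, γ t) = |s - t|` for all `s, t ∈ [0, T]`. -/
def IsUnitSpeedPath {X : Type*} [MetricSpace X] (γ : ℝ → X) (T : ℝ) : Prop :=
  ∀ s ∈ Set.Icc (0 : ℝ) T, ∀ t ∈ Set.Icc (0 : ℝ) T, dist (γ s) (γ t) = |s - t|

/-- A geodesic space: any two points are joined by a unit-speed shortest path. -/
def IsGeodesicSpace (X : Type*) [MetricSpace X] : Prop :=
  ∀ x y : X, ∃ γ : ℝ → X, γ 0 = x ∧ γ (dist x y) = y ∧ IsUnitSpeedPath γ (dist x y)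

/-- No branching geodesics: two unit-speed shortest paths issuing from the same point
which agree on a nontrivial initial interval agree on their common domain. -/
def NoBranchingGeodesics (X : Type*) [MetricSpace X] : Prop :=
  ∀ (γ η : ℝ → X) (T S : ℝ), IsUnitSpeedPath γ T → IsUnitSpeedPath η S → γ 0 = η 0 →
    (∃ t₀ > (0 : ℝ), ∀ t ∈ Set.Icc (0 : ℝ) t₀, γ t = η t) →
    ∀ t ∈ Set.Icc (0 : ℝ) (min T S), γ t = η t

/-- On a proper geodesic metric space without branching geodesics, a unit-speed shortest
path from a point `x ∈ E(A,B)` to `A` is strictly closer to `A` than to `B` at every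
positive time. -/
theorem shortestPath_from_equidistant_strictly_closer
    {X : Type*} [MetricSpace X] [ProperSpace X]
    (hgeo : IsGeodesicSpace X) (hnb : NoBranchingGeodesics X)
    (A B : Set X) (hA : A.Nonempty) (hB : B.Nonempty) (hAB : Disjoint A B)
    (hAc : IsClosed A) (hBc : IsClosed B)
    (x : X) (hx : x ∈ equidistantSet A B)
    (γ : ℝ → X) (T : ℝ) (hT : T = Metric.infDist x A)
    (hγ0 : γ 0 = x) (hγT : γ T ∈ A) (hγ : IsUnitSpeedPath γ T) :
    ∀ t : ℝ, 0 < t → t ≤ T → Metric.infDist (γ t) A < Metric.infDist (γ t) B := by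
  intro t ht htT
  have hT0 : (0:ℝ) ≤ T := ht.le.trans htT
  have hxB : Metric.infDist x B = T := by
    have : Metric.infDist x A = Metric.infDist x B := hx
    rw [← this]; exact hT.symm
  have htm : t ∈ Set.Icc (0:ℝ) T := ⟨ht.le, htT⟩
  have h0m : (0:ℝ) ∈ Set.Icc (0:ℝ) T := ⟨le_refl 0, hT0⟩
  have hTm : T ∈ Set.Icc (0:ℝ) T := ⟨hT0, le_refl T⟩
  have hdist0 : ∀ s ∈ Set.Icc (0:ℝ) T, dist x (γ s) = s := by
    intro s hs
    have h := hγ 0 h0m s hs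
    rw [hγ0] at h
    rw [h, abs_of_nonpos (by linarith [hs.1])]
    ring
  have hdγ : dist (γ t) (γ T) = T - t := by
    have h := hγ t htm T hTm
    rw [h, abs_of_nonpos (by linarith), neg_sub]
  have hA1 : Metric.infDist (γ t) A ≤ T - t := hdγ ▸ Metric.infDist_le_dist_of_mem hγT
  have hB1 : T - t ≤ Metric.infDist (γ t) B := by
    have h1 : Metric.infDist x B ≤ Metric.infDist (γ t) B + dist x (γ t) :=
      Metric.infDist_le_infDist_add_dist
    rw [hxB, hdist0 t htm] at h1
    linarith
  by_contra hcon
  push_neg at hcon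
  have hBeq : Metric.infDist (γ t) B = T - t := le_antisymm (hcon.trans hA1) hB1
  obtain ⟨b, hbB, hbd⟩ := hBc.exists_infDist_eq_dist hB (γ t)
  have hdb : dist (γ t) b = T - t := by rw [← hbd, hBeq]
  obtain ⟨η, hη0, hηd, hηu⟩ := hgeo (γ t) b
  rw [hdb] at hηd hηu
  have hxb : dist x b = T := by
    have h1 : dist x b ≤ dist x (γ t) + dist (γ t) b := dist_triangle _ _ _
    rw [hdist0 t htm, hdb] at h1
    have h2 : T ≤ dist x b := by
      rw [← hxB]; exact Metric.infDist_le_dist_of_mem hbB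
    linarith
  have key : ∀ s ∈ Set.Icc (0:ℝ) t, ∀ u ∈ Set.Icc t T, dist (γ s) (η (u - t)) = u - s := by
    intro s hs u hu
    have hum : u - t ∈ Set.Icc (0:ℝ) (T - t) := ⟨by linarith [hu.1], by linarith [hu.2]⟩
    have hηdist : dist (γ t) (η (u - t)) = u - t := by
      rw [← hη0]
      have h := hηu 0 ⟨le_refl 0, by linarith⟩ (u - t) hum
      rw [h, abs_of_nonpos (by linarith [hu.1])]
      ring
    have hγdist : dist (γ s) (γ t) = t - s := by
      have h := hγ s ⟨hs.1, hs.2.trans htT⟩ t htm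
      rw [h, abs_of_nonpos (by linarith [hs.2]), neg_sub]
    have hηb : dist (η (u - t)) b = T - u := by
      have h := hηu (u - t) hum (T - t) ⟨by linarith, le_refl _⟩
      rw [hηd] at h
      rw [h, abs_of_nonpos (by linarith [hu.2])]
      ring
    have hub : dist (γ s) (η (u - t)) ≤ u - s := by
      have h := dist_triangle (γ s) (γ t) (η (u - t))
      rw [hγdist, hηdist] at h
      linarith
    have hlb : u - s ≤ dist (γ s) (η (u - t)) := by
      have h1 : dist x b ≤ dist x (γ s) + dist (γ s) (η (u - t)) + dist (η (u - t)) b :=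
        dist_triangle4 _ _ _ _
      rw [hxb, hdist0 s ⟨hs.1, hs.2.trans htT⟩, hηb] at h1
      linarith
    linarith
  set σ : ℝ → X := fun s => if s ≤ t then γ s else η (s - t) with hσdef
  have hσval : ∀ s, s ≤ t → σ s = γ s := fun s h => if_pos h
  have hσval2 : ∀ s, ¬ s ≤ t → σ s = η (s - t) := fun s h => if_neg h
  have hσ : IsUnitSpeedPath σ T := by
    intro s hs u hu
    rcases le_or_gt s t with hst | hst <;> rcases le_or_gt u t with hut | hut
    · rw [hσval s hst, hσval u hut]; exact hγ s hs u hu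
    · rw [hσval s hst, hσval2 u (not_le.mpr hut)]
      rw [key s ⟨hs.1, hst⟩ u ⟨hut.le, hu.2⟩, abs_of_nonpos (by linarith)]
      ring
    · rw [hσval2 s (not_le.mpr hst), hσval u hut, dist_comm]
      rw [key u ⟨hu.1, hut⟩ s ⟨hst.le, hs.2⟩, abs_of_nonneg (by linarith)]
    · rw [hσval2 s (not_le.mpr hst), hσval2 u (not_le.mpr hut)]
      have h := hηu (s - t) ⟨by linarith, by linarith [hs.2]⟩
        (u - t) ⟨by linarith, by linarith [hu.2]⟩
      rw [h, show s - t - (u - t) = s - u by ring]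
  have hagree : ∃ t₀ > (0:ℝ), ∀ s ∈ Set.Icc (0:ℝ) t₀, γ s = σ s :=
    ⟨t, ht, fun s hs => (hσval s hs.2).symm⟩
  have hσ0 : γ 0 = σ 0 := (hσval 0 ht.le).symm
  have hfin : γ T = σ T := hnb γ σ T T hγ hσ hσ0 hagree T (by rw [min_self]; exact hTm)
  have hγTb : γ T = b := by
    rcases le_or_gt T t with h | h
    · have htT' : t = T := le_antisymm htT h
      have hb0 : dist (γ t) b = 0 := by rw [hdb, htT']; ring
      have : b = γ t := (dist_eq_zero.mp hb0).symm
      rw [this, htT']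
    · rw [hfin, hσval2 T (not_le.mpr h)]
      exact hηd
  exact Set.disjoint_left.mp hAB hγT (by rw [hγTb]; exact hbB)
end

section
/- Let X be a proper geodesic metric space with no branching geodesics, let A and B be nonempty disjoint closed subsets of X, and let x ∈ E(A,B). Then there exist a ∈ A, b ∈ B, and a continuous path σ : [0,1] → X with σ(0) = a and σ(1) = b such that the image of σ intersects E(A,B) only in the single point x. -/
open Metric Set

/-- Key lemma: if `γ` is a unit-speed shortest path from `x` to a point `a ∈ A` of
length `r = infDist x B`, then no interior point `γ t`, `0 < t ≤ r`, is equidistant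
from `A` and `B` (given `A`, `B` disjoint, `B` closed nonempty). -/
lemma no_equidistant_on_leg {X : Type*} [MetricSpace X] [ProperSpace X]
    (hgeo : IsGeodesicSpace X) (hnb : NoBranchingGeodesics X)
    (A B : Set X) (hBc : IsClosed B) (hB : B.Nonempty) (hAB : Disjoint A B)
    (x : X) (r : ℝ) (hrB : Metric.infDist x B = r)
    (γ : ℝ → X) (hγ : IsUnitSpeedPath γ r) (hγ0 : γ 0 = x)
    (a : X) (ha : a ∈ A) (hγr : γ r = a)
    (t : ℝ) (ht0 : 0 < t) (htr : t ≤ r)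
    (hE : Metric.infDist (γ t) A = Metric.infDist (γ t) B) : False := by
  have htmem : t ∈ Set.Icc (0:ℝ) r := ⟨ht0.le, htr⟩
  have hrmem : r ∈ Set.Icc (0:ℝ) r := ⟨le_trans ht0.le htr, le_rfl⟩
  have h0mem : (0:ℝ) ∈ Set.Icc (0:ℝ) r := ⟨le_rfl, le_trans ht0.le htr⟩
  have hdta : dist (γ t) a = r - t := by
    rw [← hγr, hγ t htmem r hrmem, abs_of_nonpos (by linarith)]; ring
  have hdxt : dist x (γ t) = t := by
    rw [← hγ0, hγ 0 h0mem t htmem, abs_of_nonpos (by linarith)]; ring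
  have hub : Metric.infDist (γ t) A ≤ r - t :=
    hdta ▸ Metric.infDist_le_dist_of_mem ha
  have hlb : r - t ≤ Metric.infDist (γ t) B := by
    have h := Metric.infDist_le_infDist_add_dist (x := x) (y := γ t) (s := B)
    rw [hrB, hdxt] at h; linarith
  have hBt : Metric.infDist (γ t) B = r - t := le_antisymm (hE ▸ hub) hlb
  obtain ⟨b', hb', hdb'⟩ := hBc.exists_infDist_eq_dist hB (γ t)
  rw [hBt] at hdb'
  have hxb' : dist x b' = r := by
    have h1 : dist x b' ≤ r := by
      calc dist x b' ≤ dist x (γ t) + dist (γ t) b' := dist_triangle _ _ _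
        _ = r := by rw [hdxt, ← hdb']; ring
    have h2 : r ≤ dist x b' := hrB ▸ Metric.infDist_le_dist_of_mem hb'
    linarith
  by_cases hteq : t = r
  · have h0 : dist (γ t) b' = 0 := by rw [← hdb', hteq]; ring
    have hb'' : γ t = b' := by rwa [dist_eq_zero] at h0
    exact Set.disjoint_left.mp hAB ha (by rw [← hγr, ← hteq, hb'']; exact hb')
  · have htlt : t < r := lt_of_le_of_ne htr hteq
    obtain ⟨δ, hδ0, hδe, hδ⟩ := hgeo (γ t) b'
    rw [← hdb'] at hδe hδ
    set η : ℝ → X := fun s => if s ≤ t then γ s else δ (s - t) with hη_def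
    have hη : IsUnitSpeedPath η r := by
      have main : ∀ s ∈ Set.Icc (0:ℝ) r, ∀ s' ∈ Set.Icc (0:ℝ) r, s ≤ s' →
          dist (η s) (η s') = |s - s'| := by
        intro s hs s' hs' hss
        by_cases h1 : s' ≤ t
        · have h2 : s ≤ t := le_trans hss h1
          simp only [hη_def, if_pos h1, if_pos h2]
          exact hγ s hs s' hs'
        · push_neg at h1
          by_cases h2 : s ≤ t
          · simp only [hη_def, if_pos h2, if_neg (not_le.mpr h1)]
            have hd1 : s' - t ∈ Set.Icc (0:ℝ) (r - t) := ⟨by linarith, by linarith [hs'.2]⟩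
            have h0' : (0:ℝ) ∈ Set.Icc (0:ℝ) (r - t) := ⟨le_rfl, by linarith⟩
            have hre : (r - t) ∈ Set.Icc (0:ℝ) (r - t) := ⟨by linarith, le_rfl⟩
            have hup : dist (γ s) (δ (s' - t)) ≤ s' - s := by
              calc dist (γ s) (δ (s' - t)) ≤ dist (γ s) (γ t) + dist (δ 0) (δ (s' - t)) := by
                    rw [hδ0]; exact dist_triangle _ _ _
                _ = (t - s) + (s' - t) := by
                    rw [hγ s hs t htmem, hδ 0 h0' (s' - t) hd1,
                        abs_of_nonpos (by linarith), abs_of_nonpos (by linarith)]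
                    ring
                _ = s' - s := by ring
            have c1 : dist x (γ s) = s := by
              rw [← hγ0, hγ 0 h0mem s hs, abs_of_nonpos (by linarith [hs.1])]; ring
            have c2 : dist (δ (s' - t)) b' = r - s' := by
              rw [← hδe, hδ (s' - t) hd1 (r - t) hre, abs_of_nonpos (by linarith [hs'.2])]
              ring
            have h4 := dist_triangle4 x (γ s) (δ (s' - t)) b'
            rw [c1, c2, hxb'] at h4
            rw [abs_of_nonpos (by linarith)]
            linarith
          · push_neg at h2
            simp only [hη_def, if_neg (not_le.mpr h1), if_neg (not_le.mpr h2)]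
            have hd1 : s - t ∈ Set.Icc (0:ℝ) (r - t) := ⟨by linarith, by linarith [hs.2]⟩
            have hd2 : s' - t ∈ Set.Icc (0:ℝ) (r - t) := ⟨by linarith, by linarith [hs'.2]⟩
            rw [hδ (s - t) hd1 (s' - t) hd2]
            congr 1; ring
      intro s hs s' hs'
      rcases le_total s s' with h | h
      · exact main s hs s' hs' h
      · rw [dist_comm, abs_sub_comm]; exact main s' hs' s hs h
    have h00 : γ 0 = η 0 := by simp only [hη_def, if_pos ht0.le]
    have hagree : ∃ t₀ > (0:ℝ), ∀ u ∈ Set.Icc (0:ℝ) t₀, γ u = η u := by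
      exact ⟨t, ht0, fun u hu => by simp only [hη_def, if_pos hu.2]⟩
    have hfin := hnb γ η r r hγ hη h00 hagree r (by rw [min_self]; exact hrmem)
    have hηr : η r = b' := by
      simp only [hη_def, if_neg (not_le.mpr htlt)]; exact hδe
    exact Set.disjoint_left.mp hAB ha (by rw [← hγr, hfin, hηr]; exact hb')

/-- On a proper geodesic metric space without branching geodesics, for every
`x ∈ E(A,B)` there is a continuous path from a point of `A` to a point of `B` whose
image meets `E(A,B)` only in the single point `x`. -/
theorem path_through_equidistant_point
    {X : Type*} [MetricSpace X] [ProperSpace X]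
    (hgeo : IsGeodesicSpace X) (hnb : NoBranchingGeodesics X)
    (A B : Set X) (hA : A.Nonempty) (hB : B.Nonempty) (hAB : Disjoint A B)
    (hAc : IsClosed A) (hBc : IsClosed B)
    (x : X) (hx : x ∈ equidistantSet A B) :
    ∃ a ∈ A, ∃ b ∈ B, ∃ σ : ℝ → X,
      ContinuousOn σ (Set.Icc 0 1) ∧ σ 0 = a ∧ σ 1 = b ∧
        σ '' Set.Icc 0 1 ∩ equidistantSet A B = {x} := by
  have hxE : Metric.infDist x A = Metric.infDist x B := hx
  set r : ℝ := Metric.infDist x A with hrA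
  have hrB : Metric.infDist x B = r := hxE.symm
  have rnn : 0 ≤ r := Metric.infDist_nonneg
  have rpos : 0 < r := by
    rcases rnn.lt_or_eq with h | h
    · exact h
    · exfalso
      have hxA : x ∈ A := (hAc.mem_iff_infDist_zero hA).mpr h.symm
      have hxB : x ∈ B := (hBc.mem_iff_infDist_zero hB).mpr (by rw [hrB, ← h])
      exact Set.disjoint_left.mp hAB hxA hxB
  obtain ⟨a, ha, hda⟩ := hAc.exists_infDist_eq_dist hA x
  obtain ⟨b, hb, hdb⟩ := hBc.exists_infDist_eq_dist hB x
  have hdxa : dist x a = r := by rw [← hda]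
  have hdxb : dist x b = r := by rw [← hdb, hrB]
  obtain ⟨γa, hγa0, hγae, hγa⟩ := hgeo x a
  rw [hdxa] at hγae hγa
  obtain ⟨γb, hγb0, hγbe, hγb⟩ := hgeo x b
  rw [hdxb] at hγbe hγb
  set σ : ℝ → X := fun s => if s ≤ (1/2 : ℝ) then γa (r * (1 - 2*s)) else γb (r * (2*s - 1))
    with hσ_def
  -- membership of parameters
  have hta : ∀ s : ℝ, 0 ≤ s → s ≤ 1/2 → r * (1 - 2*s) ∈ Set.Icc (0:ℝ) r :=
    fun s h0 h1 => ⟨by nlinarith, by nlinarith⟩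
  have htb : ∀ s : ℝ, 1/2 ≤ s → s ≤ 1 → r * (2*s - 1) ∈ Set.Icc (0:ℝ) r :=
    fun s h0 h1 => ⟨by nlinarith, by nlinarith⟩
  have h0r : (0:ℝ) ∈ Set.Icc (0:ℝ) r := ⟨le_rfl, rnn⟩
  -- distance to x along each leg
  have dA : ∀ s : ℝ, 0 ≤ s → s ≤ 1/2 → dist (γa (r * (1 - 2*s))) x = r * (1 - 2*s) := by
    intro s h0 h1
    rw [← hγa0, hγa _ (hta s h0 h1) 0 h0r, sub_zero, abs_of_nonneg (hta s h0 h1).1]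
  have dB : ∀ s : ℝ, 1/2 ≤ s → s ≤ 1 → dist (γb (r * (2*s - 1))) x = r * (2*s - 1) := by
    intro s h0 h1
    rw [← hγb0, hγb _ (htb s h0 h1) 0 h0r, sub_zero, abs_of_nonneg (htb s h0 h1).1]
  -- Lipschitz bound
  have hLip : ∀ s ∈ Set.Icc (0:ℝ) 1, ∀ s' ∈ Set.Icc (0:ℝ) 1,
      dist (σ s) (σ s') ≤ 2*r * |s - s'| := by
    have main : ∀ s ∈ Set.Icc (0:ℝ) 1, ∀ s' ∈ Set.Icc (0:ℝ) 1, s ≤ s' →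
        dist (σ s) (σ s') ≤ 2*r * |s - s'| := by
      intro s hs s' hs' hss
      rw [abs_of_nonpos (by linarith)]
      by_cases h1 : s' ≤ 1/2
      · have h2 : s ≤ 1/2 := le_trans hss h1
        simp only [hσ_def, if_pos h1, if_pos h2]
        rw [hγa _ (hta s hs.1 h2) _ (hta s' hs'.1 h1), abs_of_nonneg (by nlinarith)]
        nlinarith
      · push_neg at h1
        by_cases h2 : s ≤ 1/2
        · simp only [hσ_def, if_pos h2, if_neg (not_le.mpr h1)]
          calc dist (γa (r * (1 - 2*s))) (γb (r * (2*s' - 1)))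
              ≤ dist (γa (r * (1 - 2*s))) x + dist (γb (r * (2*s' - 1))) x := by
                rw [dist_comm (γb _) x]; exact dist_triangle _ _ _
            _ = r * (1 - 2*s) + r * (2*s' - 1) := by
                rw [dA s hs.1 h2, dB s' h1.le hs'.2]
            _ ≤ 2*r * -(s - s') := by nlinarith
        · push_neg at h2
          simp only [hσ_def, if_neg (not_le.mpr h1), if_neg (not_le.mpr h2)]
          rw [hγb _ (htb s h2.le hs.2) _ (htb s' h1.le hs'.2), abs_of_nonpos (by nlinarith)]
          nlinarith
    intro s hs s' hs'
    rcases le_total s s' with h | h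
    · exact main s hs s' hs' h
    · rw [dist_comm, abs_sub_comm]; exact main s' hs' s hs h
  have hσc : ContinuousOn σ (Set.Icc 0 1) := by
    have hL : LipschitzOnWith (Real.toNNReal (2*r)) σ (Set.Icc 0 1) := by
      rw [lipschitzOnWith_iff_dist_le_mul]
      intro s hs s' hs'
      rw [Real.coe_toNNReal _ (by linarith), Real.dist_eq]
      exact hLip s hs s' hs'
    exact hL.continuousOn
  have hσ0 : σ 0 = a := by
    have : (0:ℝ) ≤ 1/2 := by norm_num
    simp only [hσ_def, if_pos this]
    rw [show r * (1 - 2*(0:ℝ)) = r by ring]; exact hγae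
  have hσ1 : σ 1 = b := by
    have : ¬ ((1:ℝ) ≤ 1/2) := by norm_num
    simp only [hσ_def, if_neg this]
    rw [show r * (2*(1:ℝ) - 1) = r by ring]; exact hγbe
  have hσhalf : σ (1/2) = x := by
    simp only [hσ_def, if_pos le_rfl]
    rw [show r * (1 - 2*(1/2:ℝ)) = 0 by ring]; exact hγa0
  refine ⟨a, ha, b, hb, σ, hσc, hσ0, hσ1, ?_⟩
  ext p
  simp only [Set.mem_inter_iff, Set.mem_image, Set.mem_singleton_iff]
  constructor
  · rintro ⟨⟨s, hs, rfl⟩, hpE⟩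
    have hpE' : Metric.infDist (σ s) A = Metric.infDist (σ s) B := hpE
    by_cases h2 : s ≤ 1/2
    · have hσs : σ s = γa (r * (1 - 2*s)) := by simp only [hσ_def, if_pos h2]
      rcases (hta s hs.1 h2).1.lt_or_eq with hlt | heq
      · exact absurd hpE' (by
          rw [hσs]
          intro hE
          exact no_equidistant_on_leg hgeo hnb A B hBc hB hAB x r hrB γa hγa hγa0
            a ha hγae _ hlt (hta s hs.1 h2).2 hE)
      · rw [hσs, ← heq]; exact hγa0
    · push_neg at h2
      have hσs : σ s = γb (r * (2*s - 1)) := by simp only [hσ_def, if_neg (not_le.mpr h2)]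
      have hlt : 0 < r * (2*s - 1) := by nlinarith
      exact absurd hpE'.symm (by
        rw [hσs]
        intro hE
        exact no_equidistant_on_leg hgeo hnb B A hAc hA hAB.symm x r hrA.symm γb hγb hγb0
          b hb hγbe _ hlt (htb s h2.le hs.2).2 hE)
  · rintro rfl
    exact ⟨⟨1/2, ⟨by norm_num, by norm_num⟩, hσhalf⟩, hx⟩
end

section
/- Let X be a proper geodesic metric space with no branching geodesics, and let A and B be nonempty disjoint closed subsets of X. Then the equidistant set E(A,B) has empty interior in X. -/
open Metric Set

/-- On a proper geodesic metric space without branching geodesics, the equidistant set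
of two nonempty disjoint closed sets has empty interior. -/
theorem equidistantSet_interior_empty
    {X : Type*} [MetricSpace X] [ProperSpace X]
    (hgeo : IsGeodesicSpace X) (hnb : NoBranchingGeodesics X)
    (A B : Set X) (hA : A.Nonempty) (hB : B.Nonempty) (hAB : Disjoint A B)
    (hAc : IsClosed A) (hBc : IsClosed B) :
    interior (equidistantSet A B) = ∅ := by
  rw [← Set.not_nonempty_iff_eq_empty]
  rintro ⟨x, hx⟩
  obtain ⟨ε, hε, hball⟩ := Metric.mem_nhds_iff.1 (mem_interior_iff_mem_nhds.1 hx)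
  have hxE : Metric.infDist x A = Metric.infDist x B := hball (mem_ball_self hε)
  set d := Metric.infDist x A with hd_def
  have hdB : Metric.infDist x B = d := hxE.symm
  have hd : 0 < d := by
    rcases (Metric.infDist_nonneg : 0 ≤ d).lt_or_eq with h | h
    · exact h
    · exfalso
      have hxA : x ∈ A := (hAc.mem_iff_infDist_zero hA).2 h.symm
      have hxB : x ∈ B := (hBc.mem_iff_infDist_zero hB).2 (hdB.trans h.symm)
      exact Set.disjoint_left.1 hAB hxA hxB
  obtain ⟨a, haA, haeq⟩ := hAc.exists_infDist_eq_dist hA x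
  have hda : dist x a = d := haeq.symm
  obtain ⟨γ, hγ0, hγa, hγ⟩ := hgeo x a
  rw [hda] at hγa hγ
  set t := min (ε/2) d with ht_def
  have ht0 : 0 < t := lt_min (by linarith) hd
  have htd : t ≤ d := min_le_right _ _
  have htε : t < ε := lt_of_le_of_lt (min_le_left _ _) (by linarith)
  set y := γ t with hy_def
  have hxy : dist x y = t := by
    have h := hγ 0 ⟨le_refl 0, hd.le⟩ t ⟨ht0.le, htd⟩
    rw [hγ0] at h
    rw [h, zero_sub, abs_neg, abs_of_nonneg ht0.le]
  have hyE : Metric.infDist y A = Metric.infDist y B := by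
    apply hball
    rw [Metric.mem_ball, dist_comm, hxy]; exact htε
  have hya : dist y a = d - t := by
    have h := hγ t ⟨ht0.le, htd⟩ d ⟨hd.le, le_refl d⟩
    rw [hγa] at h
    rw [h, abs_of_nonpos (by linarith)]; ring
  have hyA : Metric.infDist y A ≤ d - t := by
    calc Metric.infDist y A ≤ dist y a := Metric.infDist_le_dist_of_mem haA
    _ = d - t := hya
  have hyB : Metric.infDist y B = d - t := by
    have h1 : d ≤ Metric.infDist y B + dist x y :=
      hdB ▸ Metric.infDist_le_infDist_add_dist
    have h2 : Metric.infDist y B ≤ d - t := hyE ▸ hyA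
    rw [hxy] at h1; linarith
  obtain ⟨b', hb'B, hb'eq⟩ := hBc.exists_infDist_eq_dist hB y
  have hyb' : dist y b' = d - t := hb'eq.symm.trans hyB
  have hxb' : dist x b' = d := by
    have h1 : dist x b' ≤ dist x y + dist y b' := dist_triangle _ _ _
    have h2 : d ≤ dist x b' := hdB ▸ Metric.infDist_le_dist_of_mem hb'B
    rw [hxy, hyb'] at h1; linarith
  obtain ⟨η, hη0, hηb, hη⟩ := hgeo y b'
  rw [hyb'] at hηb hη
  set γ' : ℝ → X := fun s => if s ≤ t then γ s else η (s - t) with hγ'_def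
  have key : ∀ s ∈ Set.Icc (0:ℝ) d, dist x (γ' s) = s ∧ dist (γ' s) b' = d - s := by
    rintro s ⟨hs0, hsd⟩
    rcases le_or_gt s t with hst | hst
    · have hγ's : γ' s = γ s := if_pos hst
      have h1 : dist x (γ s) = s := by
        have h := hγ 0 ⟨le_refl 0, hd.le⟩ s ⟨hs0, le_trans hst htd⟩
        rw [hγ0] at h
        rw [h, zero_sub, abs_neg, abs_of_nonneg hs0]
      have h2 : dist (γ s) y = t - s := by
        have h := hγ s ⟨hs0, le_trans hst htd⟩ t ⟨ht0.le, htd⟩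
        rw [h, abs_of_nonpos (by linarith)]; ring
      refine ⟨by rw [hγ's]; exact h1, ?_⟩
      rw [hγ's]
      have hub : dist (γ s) b' ≤ d - s := by
        calc dist (γ s) b' ≤ dist (γ s) y + dist y b' := dist_triangle _ _ _
        _ = d - s := by rw [h2, hyb']; ring
      have hlb : d ≤ s + dist (γ s) b' := by
        have h := dist_triangle x (γ s) b'
        rw [h1] at h; rw [← hxb']; linarith
      linarith
    · have hγ's : γ' s = η (s - t) := if_neg (not_le.2 hst)
      have h2 : dist (η (s - t)) b' = d - s := by
        have h := hη (s - t) ⟨by linarith, by linarith⟩ (d - t) ⟨by linarith, le_refl _⟩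
        rw [hηb] at h
        rw [h, abs_of_nonpos (by linarith)]; ring
      have h3 : dist y (η (s - t)) = s - t := by
        have h := hη 0 ⟨le_refl 0, by linarith⟩ (s - t) ⟨by linarith, by linarith⟩
        rw [hη0] at h
        rw [h, zero_sub, abs_neg, abs_of_nonneg (by linarith)]
      refine ⟨?_, by rw [hγ's]; exact h2⟩
      rw [hγ's]
      have hub : dist x (η (s - t)) ≤ s := by
        have h := dist_triangle x y (η (s - t))
        rw [hxy, h3] at h; linarith
      have hlb : s ≤ dist x (η (s - t)) := by
        have h := dist_triangle x (η (s - t)) b'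
        rw [hxb', h2] at h; linarith
      linarith
  have hγ'unit : IsUnitSpeedPath γ' d := by
    have main : ∀ s ∈ Set.Icc (0:ℝ) d, ∀ u ∈ Set.Icc (0:ℝ) d, s ≤ u →
        dist (γ' s) (γ' u) = u - s := by
      rintro s ⟨hs0, hsd⟩ u ⟨hu0, hud⟩ hsu
      have hlb : u - s ≤ dist (γ' s) (γ' u) := by
        have h1 := (key s ⟨hs0, hsd⟩).1
        have h2 := (key u ⟨hu0, hud⟩).1
        have h := dist_triangle x (γ' s) (γ' u)
        rw [h1, h2] at h
        linarith
      have hub : dist (γ' s) (γ' u) ≤ u - s := by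
        rcases le_or_gt u t with hut | hut
        · have e1 : γ' s = γ s := if_pos (le_trans hsu hut)
          have e2 : γ' u = γ u := if_pos hut
          rw [e1, e2, hγ s ⟨hs0, le_trans (le_trans hsu hut) htd⟩ u ⟨hu0, le_trans hut htd⟩,
            abs_of_nonpos (by linarith)]
          linarith
        · rcases le_or_gt s t with hst | hst
          · have e1 : γ' s = γ s := if_pos hst
            have e2 : γ' u = η (u - t) := if_neg (not_le.2 hut)
            have h2 : dist (γ s) y = t - s := by
              have h := hγ s ⟨hs0, le_trans hst htd⟩ t ⟨ht0.le, htd⟩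
              rw [h, abs_of_nonpos (by linarith)]; ring
            have h3 : dist y (η (u - t)) = u - t := by
              have h := hη 0 ⟨le_refl 0, by linarith⟩ (u - t) ⟨by linarith, by linarith⟩
              rw [hη0] at h
              rw [h, zero_sub, abs_neg, abs_of_nonneg (by linarith)]
            calc dist (γ' s) (γ' u) ≤ dist (γ' s) y + dist y (γ' u) := dist_triangle _ _ _
            _ = u - s := by rw [e1, e2, h2, h3]; ring
          · have e1 : γ' s = η (s - t) := if_neg (not_le.2 hst)
            have e2 : γ' u = η (u - t) := if_neg (not_le.2 hut)
            rw [e1, e2, hη (s - t) ⟨by linarith, by linarith⟩ (u - t) ⟨by linarith, by linarith⟩,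
              abs_of_nonpos (by linarith)]
            linarith
      linarith
    intro s hs u hu
    rcases le_total s u with h | h
    · rw [main s hs u hu h, abs_of_nonpos (by linarith : s - u ≤ 0)]; ring
    · rw [dist_comm, main u hu s hs h, abs_of_nonneg (by linarith : (0:ℝ) ≤ s - u)]
  have hagree : ∀ s ∈ Set.Icc (0:ℝ) (min d d), γ s = γ' s := by
    apply hnb γ γ' d d hγ hγ'unit
    · exact (if_pos ht0.le).symm
    · exact ⟨t, ht0, fun s hs => (if_pos hs.2).symm⟩
  have hfin : γ d = γ' d := hagree d ⟨hd.le, le_of_eq (min_self d).symm⟩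
  have hγ'd : γ' d = b' := by
    have h := (key d ⟨hd.le, le_refl d⟩).2
    rw [sub_self] at h
    exact dist_eq_zero.1 h
  have hab : a = b' := by rw [← hγa, hfin, hγ'd]
  exact Set.disjoint_left.1 hAB haA (hab ▸ hb'B)
end

section
/- Let X be a proper geodesic metric space with no branching geodesics, and let A and B be nonempty, disjoint, closed, connected subsets of X. Then E(A,B) is minimal separating in X: the complement X \ E(A,B) is disconnected, but for every proper subset E' ⊊ E(A,B), the complement X \ E' is connected. -/
open Metric Set

lemma aux_preconnected {X : Type*} [MetricSpace X] [ProperSpace X]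
    (hgeo : IsGeodesicSpace X) (A B : Set X) (hA : A.Nonempty) (hB : B.Nonempty)
    (hAB : Disjoint A B) (hAc : IsClosed A) (hBc : IsClosed B) (hAconn : IsConnected A) :
    IsPreconnected {x : X | infDist x A < infDist x B} := by
  obtain ⟨a₀, ha₀⟩ := hA
  have hA' : A.Nonempty := ⟨a₀, ha₀⟩
  have hAsub : A ⊆ {x : X | infDist x A < infDist x B} := by
    intro a ha
    have h1 : infDist a A = 0 := infDist_zero_of_mem ha
    have h2 : 0 < infDist a B :=
      (hBc.notMem_iff_infDist_pos hB).1 (fun hb => hAB.ne_of_mem ha hb rfl)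
    simpa [h1] using h2
  apply isPreconnected_of_forall a₀
  intro y hy
  obtain ⟨ay, hayA, hay⟩ := hAc.exists_infDist_eq_dist hA' y
  obtain ⟨σ, hσ0, hσd, hσ⟩ := hgeo y ay
  have hd0 : (0:ℝ) ≤ dist y ay := dist_nonneg
  have himg : IsPreconnected (σ '' Icc 0 (dist y ay)) := by
    refine isPreconnected_Icc.image σ ?_
    refine LipschitzOnWith.continuousOn (K := 1) ?_
    intro s hs u hu
    rw [edist_dist, edist_dist, ENNReal.coe_one, one_mul, hσ s hs u hu, Real.dist_eq]
  refine ⟨σ '' Icc 0 (dist y ay) ∪ A, ?_, Or.inr ha₀,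
    Or.inl ⟨0, ⟨le_refl _, hd0⟩, hσ0⟩, ?_⟩
  · rintro z (⟨t, ht, rfl⟩ | hz)
    · have h1 : dist (σ t) ay = dist y ay - t := by
        have h := hσ t ht (dist y ay) ⟨hd0, le_refl _⟩
        rw [hσd] at h
        rw [h, abs_of_nonpos (by linarith [ht.2])]; ring
      have h2 : dist y (σ t) = t := by
        have h := hσ 0 ⟨le_refl _, hd0⟩ t ht
        rw [hσ0] at h
        rw [h, abs_of_nonpos (by linarith [ht.1])]; ring
      have h3 : infDist (σ t) A ≤ dist y ay - t := h1 ▸ infDist_le_dist_of_mem hayA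
      have h4 : infDist y B ≤ infDist (σ t) B + dist y (σ t) :=
        infDist_le_infDist_add_dist
      rw [h2] at h4
      have h5 : infDist y A < infDist y B := hy
      rw [hay] at h5
      exact lt_of_le_of_lt h3 (by linarith)
    · exact hAsub hz
  · exact IsPreconnected.union ay ⟨dist y ay, ⟨hd0, le_refl _⟩, hσd⟩ hayA himg
      hAconn.isPreconnected

lemma aux_closure {X : Type*} [MetricSpace X] [ProperSpace X]
    (hgeo : IsGeodesicSpace X) (hnb : NoBranchingGeodesics X)
    (A B : Set X) (hA : A.Nonempty) (hB : B.Nonempty)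
    (hAB : Disjoint A B) (hAc : IsClosed A) (hBc : IsClosed B)
    (p : X) (hp : infDist p A = infDist p B) :
    p ∈ closure {x : X | infDist x A < infDist x B} := by
  set r := infDist p A with hr
  have hr0 : 0 < r := by
    rcases (infDist_nonneg (x := p) (s := A)).lt_or_eq with h | h
    · exact h
    · exfalso
      have hpA : p ∈ A := (hAc.mem_iff_infDist_zero hA).2 h.symm
      have hpB : p ∈ B := (hBc.mem_iff_infDist_zero hB).2 (hp ▸ h.symm)
      exact hAB.ne_of_mem hpA hpB rfl
  obtain ⟨a, haA, hra⟩ := hAc.exists_infDist_eq_dist hA p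
  have hpa : dist p a = r := hra.symm
  obtain ⟨γ, hγ0, hγa, hγ⟩ := hgeo p a
  rw [hpa] at hγa hγ
  -- the key step: γ t ∈ U for 0 < t ≤ r
  have key : ∀ t, 0 < t → t ≤ r → infDist (γ t) A < infDist (γ t) B := by
    intro t ht0 htr
    have htI : t ∈ Icc (0:ℝ) r := ⟨ht0.le, htr⟩
    have h0I : (0:ℝ) ∈ Icc (0:ℝ) r := ⟨le_refl _, hr0.le⟩
    have hrI : r ∈ Icc (0:ℝ) r := ⟨hr0.le, le_refl _⟩
    have hpt : dist p (γ t) = t := by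
      have h := hγ 0 h0I t htI
      rw [hγ0] at h
      rw [h, abs_of_nonpos (by linarith)]; ring
    have hta : dist (γ t) a = r - t := by
      have h := hγ t htI r hrI
      rw [hγa] at h
      rw [h, abs_of_nonpos (by linarith)]; ring
    have hUA : infDist (γ t) A ≤ r - t := hta ▸ infDist_le_dist_of_mem haA
    have hUB : r - t ≤ infDist (γ t) B := by
      have h : infDist p B ≤ infDist (γ t) B + dist p (γ t) := infDist_le_infDist_add_dist
      rw [hpt, ← hp] at h
      linarith
    by_contra hcon
    push_neg at hcon
    have hBeq : infDist (γ t) B = r - t := le_antisymm (hcon.trans hUA) hUB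
    obtain ⟨b, hbB, hqb⟩ := hBc.exists_infDist_eq_dist hB (γ t)
    rw [hBeq] at hqb
    have hab : a = b := by
      rcases htr.lt_or_eq with htlt | hteq
      · -- build the concatenated path η and use non-branching
        obtain ⟨δ, hδ0, hδb, hδ⟩ := hgeo (γ t) b
        rw [← hqb] at hδb hδ
        have hpb : dist p b = r := by
          refine le_antisymm ?_ ?_
          · calc dist p b ≤ dist p (γ t) + dist (γ t) b := dist_triangle _ _ _
              _ = r := by rw [hpt, ← hqb]; ring
          · have := infDist_le_dist_of_mem hbB (x := p)
            rw [← hp] at this; exact this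
        set η : ℝ → X := fun s => if s ≤ t then γ s else δ (s - t) with hηdef
        have keydist : ∀ s ∈ Icc (0:ℝ) r, ∀ u ∈ Icc (0:ℝ) r, s ≤ u →
            dist (η s) (η u) = u - s := by
          intro s hs u hu hsu
          by_cases h1 : u ≤ t
          · have h2 : s ≤ t := hsu.trans h1
            simp only [hηdef, if_pos h1, if_pos h2]
            rw [hγ s hs u hu, abs_of_nonpos (by linarith)]; ring
          · push_neg at h1
            have huI : u - t ∈ Icc (0:ℝ) (r - t) := ⟨by linarith, by linarith [hu.2]⟩
            have h0I' : (0:ℝ) ∈ Icc (0:ℝ) (r - t) := ⟨le_refl _, by linarith⟩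
            have hrI' : r - t ∈ Icc (0:ℝ) (r - t) := ⟨by linarith, le_refl _⟩
            by_cases h2 : s ≤ t
            · simp only [hηdef, if_pos h2, if_neg (not_le.2 h1)]
              have dγ : dist (γ s) (γ t) = t - s := by
                rw [hγ s hs t htI, abs_of_nonpos (by linarith)]; ring
              have dδ : dist (γ t) (δ (u - t)) = u - t := by
                have h := hδ 0 h0I' (u - t) huI
                rw [hδ0] at h
                rw [h, abs_of_nonpos (by linarith)]; ring
              have ddb : dist (δ (u - t)) b = r - u := by
                have h := hδ (u - t) huI (r - t) hrI'
                rw [hδb] at h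
                rw [h, abs_of_nonpos (by linarith [hu.2])]; ring
              have dps : dist p (γ s) = s := by
                have h := hγ 0 h0I s hs
                rw [hγ0] at h
                rw [h, abs_of_nonpos (by linarith [hs.1])]; ring
              have hup : dist (γ s) (δ (u - t)) ≤ u - s := by
                calc dist (γ s) (δ (u - t)) ≤ dist (γ s) (γ t) + dist (γ t) (δ (u - t)) :=
                      dist_triangle _ _ _
                  _ = u - s := by rw [dγ, dδ]; ring
              have hlow : u - s ≤ dist (γ s) (δ (u - t)) := by
                have h4 : dist p b ≤ dist p (γ s) + dist (γ s) (δ (u - t)) +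
                    dist (δ (u - t)) b := dist_triangle4 _ _ _ _
                rw [hpb, dps, ddb] at h4
                linarith
              linarith [le_antisymm hup hlow]
            · push_neg at h2
              have hsI : s - t ∈ Icc (0:ℝ) (r - t) := ⟨by linarith, by linarith [hs.2]⟩
              simp only [hηdef, if_neg (not_le.2 h2), if_neg (not_le.2 h1)]
              rw [hδ (s - t) hsI (u - t) huI, abs_of_nonpos (by linarith)]; ring
        have hη : IsUnitSpeedPath η r := by
          intro s hs u hu
          rcases le_total s u with h | h
          · rw [keydist s hs u hu h, abs_of_nonpos (sub_nonpos.2 h)]; ring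
          · rw [dist_comm, keydist u hu s hs h, abs_of_nonneg (sub_nonneg.2 h)]
        have hagree := hnb γ η r r hγ hη
          (by simp only [hηdef, if_pos ht0.le])
          ⟨t, ht0, fun s hs => by simp only [hηdef, if_pos hs.2]⟩
          r ⟨hr0.le, by rw [min_self]⟩
        rw [hγa] at hagree
        have : η r = b := by
          simp only [hηdef, if_neg (not_le.2 htlt), hδb]
        rw [this] at hagree
        exact hagree
      · -- t = r : b coincides with a directly
        have : dist (γ t) b = 0 := by rw [← hqb]; linarith
        have hbq : b = γ t := by rw [dist_comm] at this; exact (dist_eq_zero.1 this)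
        rw [hbq, hteq, hγa]
    exact hAB.ne_of_mem haA (hab ▸ hbB) rfl
  rw [Metric.mem_closure_iff]
  intro ε hε
  have ht0 : 0 < min (ε / 2) r := lt_min (by linarith) hr0
  have htr : min (ε / 2) r ≤ r := min_le_right _ _
  refine ⟨γ (min (ε / 2) r), key _ ht0 htr, ?_⟩
  have h := hγ 0 ⟨le_refl _, hr0.le⟩ (min (ε / 2) r) ⟨ht0.le, htr⟩
  rw [hγ0] at h
  rw [h, abs_of_nonpos (by linarith)]
  have : min (ε / 2) r ≤ ε / 2 := min_le_left _ _
  linarith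

/-- On a proper geodesic metric space without branching geodesics, the equidistant set
of two nonempty disjoint closed connected sets is minimal separating: its complement is
disconnected, but the complement of any proper subset is connected. -/
theorem equidistantSet_minimal_separating
    {X : Type*} [MetricSpace X] [ProperSpace X]
    (hgeo : IsGeodesicSpace X) (hnb : NoBranchingGeodesics X)
    (A B : Set X) (hA : A.Nonempty) (hB : B.Nonempty) (hAB : Disjoint A B)
    (hAc : IsClosed A) (hBc : IsClosed B)
    (hAconn : IsConnected A) (hBconn : IsConnected B) :
    ¬ IsPreconnected ((equidistantSet A B)ᶜ) ∧
      ∀ E' : Set X, E' ⊂ equidistantSet A B → IsConnected (E'ᶜ) := by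
  classical
  set U : Set X := {x | infDist x A < infDist x B} with hUdef
  set V : Set X := {x | infDist x B < infDist x A} with hVdef
  obtain ⟨a₀, ha₀⟩ := hA
  obtain ⟨b₀, hb₀⟩ := hB
  have hA' : A.Nonempty := ⟨a₀, ha₀⟩
  have hB' : B.Nonempty := ⟨b₀, hb₀⟩
  have hAsub : A ⊆ U := by
    intro a ha
    have h1 : infDist a A = 0 := infDist_zero_of_mem ha
    have h2 : 0 < infDist a B :=
      (hBc.notMem_iff_infDist_pos hB').1 (fun hb => hAB.ne_of_mem ha hb rfl)
    simpa [hUdef, h1] using h2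
  have hBsub : B ⊆ V := by
    intro b hb
    have h1 : infDist b B = 0 := infDist_zero_of_mem hb
    have h2 : 0 < infDist b A :=
      (hAc.notMem_iff_infDist_pos hA').1 (fun ha => hAB.ne_of_mem ha hb rfl)
    simpa [hVdef, h1] using h2
  have hEc : (equidistantSet A B)ᶜ = U ∪ V := by
    ext x
    simp only [equidistantSet, mem_compl_iff, mem_setOf_eq, hUdef, hVdef, mem_union]
    exact ⟨fun h => lt_or_gt_of_ne h, fun h => h.elim ne_of_lt (fun h' => ne_of_gt h')⟩
  have hUopen : IsOpen U := isOpen_lt (continuous_infDist_pt A) (continuous_infDist_pt B)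
  have hVopen : IsOpen V := isOpen_lt (continuous_infDist_pt B) (continuous_infDist_pt A)
  have hUconn : IsPreconnected U := aux_preconnected hgeo A B hA' hB' hAB hAc hBc hAconn
  have hVconn : IsPreconnected V := aux_preconnected hgeo B A hB' hA' hAB.symm hBc hAc hBconn
  have hUnotE : ∀ x ∈ U, x ∉ equidistantSet A B := fun x hx => ne_of_lt hx
  have hVnotE : ∀ x ∈ V, x ∉ equidistantSet A B := fun x hx => ne_of_gt hx
  constructor
  · intro h
    obtain ⟨x, _, hxU, hxV⟩ := h U V hUopen hVopen (hEc ▸ subset_rfl)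
      ⟨a₀, by rw [hEc]; exact Or.inl (hAsub ha₀), hAsub ha₀⟩
      ⟨b₀, by rw [hEc]; exact Or.inr (hBsub hb₀), hBsub hb₀⟩
    have h1 : infDist x A < infDist x B := hxU
    have h2 : infDist x B < infDist x A := hxV
    linarith
  · intro E' hE'
    obtain ⟨p₀, hp₀E, hp₀E'⟩ := exists_of_ssubset hE'
    -- for every p in the equidistant set, (U ∪ {p}) ∪ (V ∪ {p}) is preconnected
    have hconn : ∀ p ∈ equidistantSet A B,
        IsPreconnected ((U ∪ {p}) ∪ (V ∪ {p})) := by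
      intro p hpE
      have hpU : p ∈ closure U := aux_closure hgeo hnb A B hA' hB' hAB hAc hBc p hpE
      have hpV : p ∈ closure V :=
        aux_closure hgeo hnb B A hB' hA' hAB.symm hBc hAc p hpE.symm
      have hU' : IsPreconnected (U ∪ {p}) :=
        hUconn.subset_closure subset_union_left
          (union_subset subset_closure (singleton_subset_iff.2 hpU))
      have hV' : IsPreconnected (V ∪ {p}) :=
        hVconn.subset_closure subset_union_left
          (union_subset subset_closure (singleton_subset_iff.2 hpV))
      exact IsPreconnected.union p (Or.inr rfl) (Or.inr rfl) hU' hV'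
    have ha₀E' : a₀ ∈ E'ᶜ := fun h => hUnotE a₀ (hAsub ha₀) (hE'.1 h)
    refine ⟨⟨a₀, ha₀E'⟩, isPreconnected_of_forall a₀ ?_⟩
    intro y hy
    set p : X := if y ∈ equidistantSet A B then y else p₀ with hpdef
    have hpE : p ∈ equidistantSet A B := by
      rw [hpdef]; split <;> [assumption; exact hp₀E]
    have hpE' : p ∉ E' := by
      rw [hpdef]; split <;> [exact hy; exact hp₀E']
    refine ⟨(U ∪ {p}) ∪ (V ∪ {p}), ?_, Or.inl (Or.inl (hAsub ha₀)), ?_, hconn p hpE⟩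
    · rintro z ((hz | hz) | (hz | hz))
      · exact fun h => hUnotE z hz (hE'.1 h)
      · rw [mem_singleton_iff] at hz; exact hz ▸ hpE'
      · exact fun h => hVnotE z hz (hE'.1 h)
      · rw [mem_singleton_iff] at hz; exact hz ▸ hpE'
    · by_cases hyE : y ∈ equidistantSet A B
      · have : p = y := by rw [hpdef, if_pos hyE]
        exact Or.inl (Or.inr (this ▸ rfl))
      · have : y ∈ U ∪ V := by rw [← hEc]; exact hyE
        rcases this with h | h
        · exact Or.inl (Or.inl h)
        · exact Or.inr (Or.inl h)
end

section
/- Let X be a proper geodesic metric space with no branching geodesics, and let A and B be nonempty, disjoint, closed, connected subsets of X. Then the open set X_A = {x ∈ X : dist(x,A) < dist(x,B)} is connected. -/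
open Metric Set

/-- On a proper geodesic metric space without branching geodesics, for nonempty disjoint
closed connected sets `A` and `B`, the open set `X_A = {x | dist(x,A) < dist(x,B)}`
is connected. -/
theorem closer_to_A_set_isConnected
    {X : Type*} [MetricSpace X] [ProperSpace X]
    (hgeo : IsGeodesicSpace X) (hnb : NoBranchingGeodesics X)
    (A B : Set X) (hA : A.Nonempty) (hB : B.Nonempty) (hAB : Disjoint A B)
    (hAc : IsClosed A) (hBc : IsClosed B)
    (hAconn : IsConnected A) (hBconn : IsConnected B) :
    IsConnected {x : X | Metric.infDist x A < Metric.infDist x B} := by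
  set XA := {x : X | Metric.infDist x A < Metric.infDist x B} with hXAdef
  have hAsub : A ⊆ XA := by
    intro a ha
    have h0 : Metric.infDist a A = 0 := Metric.infDist_zero_of_mem ha
    have hnb' : a ∉ B := fun hb => (Set.disjoint_left.mp hAB ha) hb
    have hpos : 0 < Metric.infDist a B :=
      (IsClosed.notMem_iff_infDist_pos hBc hB).mp hnb'
    show Metric.infDist a A < Metric.infDist a B
    rw [h0]; exact hpos
  obtain ⟨a0, ha0⟩ := hA
  refine ⟨⟨a0, hAsub ha0⟩, ?_⟩
  apply isPreconnected_of_forall a0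
  intro y hy
  obtain ⟨a, haA, hda⟩ := hAc.exists_infDist_eq_dist ⟨a0, ha0⟩ y
  obtain ⟨γ, hγ0, hγd, hγ⟩ := hgeo y a
  set d := dist y a with hd
  have hd0 : 0 ≤ d := dist_nonneg
  have hsub : γ '' Set.Icc 0 d ⊆ XA := by
    rintro z ⟨s, hs, rfl⟩
    have h1 : Metric.infDist (γ s) A ≤ d - s := by
      have : dist (γ s) (γ d) = |s - d| := hγ s hs d ⟨hd0, le_refl d⟩
      rw [hγd] at this
      have habs : |s - d| = d - s := by
        rw [abs_of_nonpos (by linarith [hs.2])]; ring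
      calc Metric.infDist (γ s) A ≤ dist (γ s) a := Metric.infDist_le_dist_of_mem haA
        _ = d - s := by rw [this, habs]
    have hdist : dist y (γ s) = s := by
      have : dist (γ 0) (γ s) = |0 - s| := hγ 0 ⟨le_refl 0, hd0⟩ s hs
      rw [hγ0] at this
      rw [this, abs_of_nonpos (by linarith [hs.1])]; ring
    have h2 : Metric.infDist y B ≤ Metric.infDist (γ s) B + s := by
      have := Metric.infDist_le_infDist_add_dist (x := y) (y := γ s) (s := B)
      rw [hdist] at this; exact this
    have hyA : Metric.infDist y A < Metric.infDist y B := hy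
    rw [hda] at hyA
    show Metric.infDist (γ s) A < Metric.infDist (γ s) B
    linarith
  have hcont : ContinuousOn γ (Set.Icc 0 d) := by
    apply LipschitzOnWith.continuousOn (K := 1)
    rw [lipschitzOnWith_iff_dist_le_mul]
    intro u hu v hv
    rw [hγ u hu v hv]
    simp [Real.dist_eq]
  have himg : IsPreconnected (γ '' Set.Icc 0 d) :=
    isPreconnected_Icc.image γ hcont
  refine ⟨A ∪ γ '' Set.Icc 0 d, ?_, Or.inl ha0, Or.inr ⟨0, ⟨le_refl 0, hd0⟩, hγ0⟩, ?_⟩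
  · exact Set.union_subset hAsub hsub
  · exact IsPreconnected.union a haA ⟨d, ⟨hd0, le_refl d⟩, hγd⟩ hAconn.isPreconnected himg
end

section
/- Let X be a proper geodesic metric space with no branching geodesics, let A and B be nonempty disjoint closed subsets of X, and let x₀ ∈ X satisfy dist(x₀,A) < dist(x₀,B). If γ : [0,T] → X is a unit-speed shortest path from x₀ to A (so γ(0) = x₀, γ(T) ∈ A, T = dist(x₀,A), and d(γ(s),γ(t)) = |s−t| for all s,t ∈ [0,T]), then dist(γ(t),A) < dist(γ(t),B) for all t ∈ [0,T]. -/
open Metric Set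

/-- On a proper geodesic metric space without branching geodesics, if `x₀` is strictly
closer to `A` than to `B`, then every point of a unit-speed shortest path from `x₀`
to `A` is strictly closer to `A` than to `B`. -/
theorem shortestPath_stays_closer_to_A
    {X : Type*} [MetricSpace X] [ProperSpace X]
    (hgeo : IsGeodesicSpace X) (hnb : NoBranchingGeodesics X)
    (A B : Set X) (hA : A.Nonempty) (hB : B.Nonempty) (hAB : Disjoint A B)
    (hAc : IsClosed A) (hBc : IsClosed B)
    (x₀ : X) (hx₀ : Metric.infDist x₀ A < Metric.infDist x₀ B)
    (γ : ℝ → X) (T : ℝ) (hT : T = Metric.infDist x₀ A)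
    (hγ0 : γ 0 = x₀) (hγT : γ T ∈ A) (hγ : IsUnitSpeedPath γ T) :
    ∀ t ∈ Set.Icc (0 : ℝ) T, Metric.infDist (γ t) A < Metric.infDist (γ t) B := by
  intro t ht
  obtain ⟨ht0, htT⟩ := ht
  have hT0 : 0 ≤ T := le_trans ht0 htT
  have hmemT : (T : ℝ) ∈ Set.Icc (0:ℝ) T := ⟨hT0, le_refl T⟩
  have hmemt : t ∈ Set.Icc (0:ℝ) T := ⟨ht0, htT⟩
  have hmem0 : (0:ℝ) ∈ Set.Icc (0:ℝ) T := ⟨le_refl 0, hT0⟩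
  have h1 : Metric.infDist (γ t) A ≤ T - t := by
    have := Metric.infDist_le_dist_of_mem (x := γ t) hγT
    have hd : dist (γ t) (γ T) = T - t := by
      rw [hγ t hmemt T hmemT, abs_of_nonpos (by linarith)]; ring
    linarith
  have h2 : Metric.infDist x₀ B ≤ Metric.infDist (γ t) B + t := by
    have := Metric.infDist_le_infDist_add_dist (x := x₀) (y := γ t) (s := B)
    have hd : dist x₀ (γ t) = t := by
      rw [← hγ0, hγ 0 hmem0 t hmemt, abs_of_nonpos (by linarith)]; ring
    linarith
  linarith
end

section
/- Let X be a proper geodesic metric space with no branching geodesics, and let A and B be nonempty disjoint compact subsets of X. Then every connected component of the open set X_A = {x ∈ X : dist(x,A) < dist(x,B)} contains a point of A. Consequently, if A can be covered by N open balls of radius ε/3, where ε = inf{d(a,b) : a ∈ A, b ∈ B}, then X_A has at most N connected components. -/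
open Metric Set

/-- A unit-speed path is (1-)Lipschitz, hence continuous, on its domain. -/
lemma IsUnitSpeedPath.continuousOn {X : Type*} [MetricSpace X] {γ : ℝ → X} {T : ℝ}
    (h : IsUnitSpeedPath γ T) : ContinuousOn γ (Set.Icc 0 T) := by
  have : LipschitzOnWith 1 γ (Set.Icc 0 T) := by
    rw [lipschitzOnWith_iff_dist_le_mul]
    intro s hs t ht
    rw [h s hs t ht, Real.dist_eq, NNReal.coe_one, one_mul]
  exact this.continuousOn

/-- If every unit-speed geodesic from `x` to `y` lies in `U`, then `y` is in the
connected component of `x` in `U`. -/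
lemma mem_connectedComponentIn_of_geodesic {X : Type*} [MetricSpace X]
    (hgeo : IsGeodesicSpace X) {U : Set X} {x y : X}
    (h : ∀ γ : ℝ → X, γ 0 = x → γ (dist x y) = y → IsUnitSpeedPath γ (dist x y) →
      ∀ t ∈ Set.Icc (0 : ℝ) (dist x y), γ t ∈ U) :
    y ∈ connectedComponentIn U x := by
  obtain ⟨γ, h0, h1, hu⟩ := hgeo x y
  have hd : (0 : ℝ) ≤ dist x y := dist_nonneg
  have hx : x ∈ γ '' Set.Icc 0 (dist x y) := ⟨0, ⟨le_rfl, hd⟩, h0⟩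
  have hy : y ∈ γ '' Set.Icc 0 (dist x y) := ⟨dist x y, ⟨hd, le_rfl⟩, h1⟩
  have hconn : IsPreconnected (γ '' Set.Icc 0 (dist x y)) :=
    isPreconnected_Icc.image γ hu.continuousOn
  have hsub : γ '' Set.Icc 0 (dist x y) ⊆ U := by
    rintro _ ⟨t, ht, rfl⟩
    exact h γ h0 h1 hu t ht
  exact hconn.subset_connectedComponentIn hx hsub hy

/-- On a proper geodesic metric space without branching geodesics, with `A`, `B`
nonempty disjoint compact sets, every connected component of
`X_A = {x | dist(x,A) < dist(x,B)}` contains a point of `A`; consequently, if `A` is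
covered by `N` open balls of radius `ε/3`, where `ε = inf {d(a,b) : a ∈ A, b ∈ B}`,
then `X_A` has at most `N` connected components. -/
theorem components_of_closer_set_meet_A
    {X : Type*} [MetricSpace X] [ProperSpace X]
    (hgeo : IsGeodesicSpace X) (hnb : NoBranchingGeodesics X)
    (A B : Set X) (hA : A.Nonempty) (hB : B.Nonempty) (hAB : Disjoint A B)
    (hAcpt : IsCompact A) (hBcpt : IsCompact B) :
    (∀ x ∈ {y : X | Metric.infDist y A < Metric.infDist y B},
        (connectedComponentIn {y : X | Metric.infDist y A < Metric.infDist y B} x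
          ∩ A).Nonempty) ∧
      ∀ (N : ℕ) (c : Fin N → X),
        A ⊆ ⋃ i, Metric.ball (c i) (sInf (Set.image2 dist A B) / 3) →
          {C : Set X | ∃ x ∈ {y : X | Metric.infDist y A < Metric.infDist y B},
              C = connectedComponentIn
                {y : X | Metric.infDist y A < Metric.infDist y B} x}.Finite ∧
            {C : Set X | ∃ x ∈ {y : X | Metric.infDist y A < Metric.infDist y B},
              C = connectedComponentIn
                {y : X | Metric.infDist y A < Metric.infDist y B} x}.ncard ≤ N := by
  classical
  set U : Set X := {y : X | Metric.infDist y A < Metric.infDist y B} with hU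
  -- every point of A lies in U
  have hAU : A ⊆ U := by
    intro a ha
    have h0 : Metric.infDist a A = 0 := infDist_zero_of_mem ha
    have hnB : a ∉ B := fun hb => (hAB.ne_of_mem ha hb) rfl
    have hpos : 0 < Metric.infDist a B :=
      (hBcpt.isClosed.notMem_iff_infDist_pos hB).mp hnB
    simpa [hU, h0] using hpos
  -- Part 1
  have part1 : ∀ x ∈ U, (connectedComponentIn U x ∩ A).Nonempty := by
    intro x hx
    obtain ⟨a, haA, hda⟩ := hAcpt.exists_infDist_eq_dist hA x
    refine ⟨a, ?_, haA⟩
    refine mem_connectedComponentIn_of_geodesic hgeo ?_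
    intro γ h0 h1 hu t ht
    have hdnn : (0 : ℝ) ≤ dist x a := dist_nonneg
    have hend : dist (γ t) a = dist x a - t := by
      have := hu t ht (dist x a) ⟨hdnn, le_rfl⟩
      rw [h1] at this
      rw [this, abs_of_nonpos (by linarith [ht.2])]
      ring
    have hA1 : Metric.infDist (γ t) A ≤ dist x a - t :=
      hend ▸ infDist_le_dist_of_mem haA
    have hxt : dist x (γ t) = t := by
      have := hu 0 ⟨le_rfl, hdnn⟩ t ht
      rw [h0] at this
      rw [this, abs_of_nonpos (by linarith [ht.1])]
      ring
    have hB1 : Metric.infDist x B ≤ Metric.infDist (γ t) B + dist x (γ t) :=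
      infDist_le_infDist_add_dist
    have hxU : Metric.infDist x A < Metric.infDist x B := hx
    show Metric.infDist (γ t) A < Metric.infDist (γ t) B
    rw [hda] at hxU
    rw [hxt] at hB1
    linarith
  refine ⟨part1, ?_⟩
  intro N c hcov
  set ε : ℝ := sInf (Set.image2 dist A B) with hε
  -- ε is a lower bound for distances to B from points of A
  have hεle : ∀ a ∈ A, ε ≤ Metric.infDist a B := by
    intro a ha
    by_contra h
    push_neg at h
    obtain ⟨b, hb, hlt⟩ := (infDist_lt_iff hB).mp h
    have : ε ≤ dist a b := csInf_le ⟨0, fun z hz => by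
      obtain ⟨a', _, b', _, rfl⟩ := hz; exact dist_nonneg⟩ (Set.mem_image2_of_mem ha hb)
    linarith
  have hεpos : 0 < ε := by
    obtain ⟨a₀, ha₀, hmin⟩ :=
      hAcpt.exists_isMinOn hA (continuous_infDist_pt B).continuousOn
    have h₀ : 0 < Metric.infDist a₀ B :=
      (hBcpt.isClosed.notMem_iff_infDist_pos hB).mp
        (fun hb => (hAB.ne_of_mem ha₀ hb) rfl)
    have : Metric.infDist a₀ B ≤ ε := by
      apply le_csInf (hA.image2 hB)
      rintro z ⟨a, ha, b, hb, rfl⟩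
      exact (hmin ha).trans (infDist_le_dist_of_mem hb)
    linarith
  -- two points of A at distance < 2ε/3 are in the same component of U
  have samecomp : ∀ a₁ ∈ A, ∀ a₂ ∈ A, dist a₁ a₂ < 2 * ε / 3 →
      a₂ ∈ connectedComponentIn U a₁ := by
    intro a₁ h₁ a₂ h₂ hd
    refine mem_connectedComponentIn_of_geodesic hgeo ?_
    intro γ h0 hend hu t ht
    set d : ℝ := dist a₁ a₂ with hdd
    have hdnn : (0 : ℝ) ≤ d := dist_nonneg
    have hγ0 : dist (γ t) a₁ = t := by
      have := hu t ht 0 ⟨le_rfl, hdnn⟩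
      rw [h0] at this
      rw [this, abs_of_nonneg (by linarith [ht.1])]
      ring
    have hγd : dist (γ t) a₂ = d - t := by
      have := hu t ht d ⟨hdnn, le_rfl⟩
      rw [hend] at this
      rw [this, abs_of_nonpos (by linarith [ht.2])]
      ring
    have hA1 : Metric.infDist (γ t) A ≤ t := by
      have := infDist_le_dist_of_mem (x := γ t) h₁; rwa [hγ0] at this
    have hA2 : Metric.infDist (γ t) A ≤ d - t := by
      have := infDist_le_dist_of_mem (x := γ t) h₂; rwa [hγd] at this
    have hB1 : Metric.infDist a₁ B ≤ Metric.infDist (γ t) B + dist a₁ (γ t) :=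
      infDist_le_infDist_add_dist
    have hB2 : Metric.infDist a₂ B ≤ Metric.infDist (γ t) B + dist a₂ (γ t) :=
      infDist_le_infDist_add_dist
    rw [dist_comm, hγ0] at hB1
    rw [dist_comm, hγd] at hB2
    have hε1 := hεle a₁ h₁
    have hε2 := hεle a₂ h₂
    show Metric.infDist (γ t) A < Metric.infDist (γ t) B
    rcases le_or_gt t (d / 2) with h | h
    · linarith
    · linarith
  -- the set of components injects into Fin N
  set S : Set (Set X) := {C : Set X | ∃ x ∈ U, C = connectedComponentIn U x} with hS
  have key : ∀ C ∈ S, ∃ i : Fin N, ∃ a, a ∈ C ∧ a ∈ A ∧ dist a (c i) < ε / 3 := by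
    rintro C ⟨x, hx, rfl⟩
    obtain ⟨a, haC, haA⟩ := part1 x hx
    obtain ⟨i, hi⟩ := Set.mem_iUnion.mp (hcov haA)
    exact ⟨i, a, haC, haA, by simpa [Metric.mem_ball, hε] using hi⟩
  have hCcomp : ∀ C ∈ S, ∀ a, a ∈ C → a ∈ A → C = connectedComponentIn U a := by
    rintro C ⟨x, hx, rfl⟩ a haC haA
    exact connectedComponentIn_eq haC
  let f : S → Fin N := fun C => (key C.1 C.2).choose
  have hf : Function.Injective f := by
    rintro ⟨C₁, hC₁⟩ ⟨C₂, hC₂⟩ hfe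
    obtain ⟨a₁, ha₁C, ha₁A, hd₁⟩ := (key C₁ hC₁).choose_spec
    obtain ⟨a₂, ha₂C, ha₂A, hd₂⟩ := (key C₂ hC₂).choose_spec
    have hfe' : (key C₁ hC₁).choose = (key C₂ hC₂).choose := hfe
    rw [hfe'] at hd₁
    have hdist : dist a₁ a₂ < 2 * ε / 3 := by
      have := dist_triangle a₁ (c (key C₂ hC₂).choose) a₂
      rw [dist_comm (c _) a₂] at this
      linarith
    have h12 : a₂ ∈ connectedComponentIn U a₁ := samecomp a₁ ha₁A a₂ ha₂A hdist
    have e1 : C₁ = connectedComponentIn U a₁ := hCcomp C₁ hC₁ a₁ ha₁C ha₁A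
    have e2 : C₂ = connectedComponentIn U a₂ := hCcomp C₂ hC₂ a₂ ha₂C ha₂A
    have e3 : connectedComponentIn U a₁ = connectedComponentIn U a₂ :=
      connectedComponentIn_eq h12
    exact Subtype.ext (e1.trans (e3.trans e2.symm))
  have hfin : S.Finite := Set.finite_coe_iff.mp (Finite.of_injective f hf)
  refine ⟨hfin, ?_⟩
  calc S.ncard = Nat.card S := (Nat.card_coe_set_eq S).symm
    _ ≤ Nat.card (Fin N) := Nat.card_le_card_of_injective f hf
    _ = N := by simp
end

section
/- Let A and B be nonempty disjoint closed subsets of the Euclidean plane ℝ², let x ∈ E(A,B), let n > 0, and let R ≥ 2n + dist(x,A). Define A' = A ∩ closedBall(x,R) and B' = B ∩ closedBall(x,R). Then E(A,B) ∩ closedBall(x,n) = E(A',B') ∩ closedBall(x,n). -/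
open Metric Set

lemma infDist_inter_closedBall_eq
    (C : Set (EuclideanSpace ℝ (Fin 2))) (hC : IsClosed C) (hCne : C.Nonempty)
    (x y : EuclideanSpace ℝ (Fin 2)) (n R : ℝ)
    (hy : dist y x ≤ n) (hR : 2 * n + Metric.infDist x C ≤ R) :
    Metric.infDist y (C ∩ Metric.closedBall x R) = Metric.infDist y C := by
  obtain ⟨c, hcC, hcd⟩ := hC.exists_infDist_eq_dist hCne y
  have h1 : Metric.infDist y C ≤ n + Metric.infDist x C := by
    calc Metric.infDist y C ≤ Metric.infDist x C + dist y x :=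
          Metric.infDist_le_infDist_add_dist
      _ ≤ n + Metric.infDist x C := by linarith
  have hd : dist y x ≥ 0 := dist_nonneg
  have hcball : c ∈ Metric.closedBall x R := by
    have : dist c x ≤ dist c y + dist y x := dist_triangle c y x
    rw [Metric.mem_closedBall]
    rw [dist_comm] at hcd
    linarith [hcd ▸ h1]
  apply le_antisymm
  · have hmem : c ∈ C ∩ Metric.closedBall x R := ⟨hcC, hcball⟩
    have := Metric.infDist_le_dist_of_mem (x := y) hmem
    linarith [hcd ▸ this]
  · exact Metric.infDist_le_infDist_of_subset Set.inter_subset_left ⟨c, hcC, hcball⟩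

/-- For nonempty disjoint closed subsets `A`, `B` of the Euclidean plane, a point
`x ∈ E(A,B)`, `n > 0`, and `R ≥ 2n + dist(x,A)`, the equidistant set of the truncated
sets `A ∩ closedBall(x,R)` and `B ∩ closedBall(x,R)` agrees with `E(A,B)` on
`closedBall(x,n)`. -/
theorem equidistantSet_localization
    (A B : Set (EuclideanSpace ℝ (Fin 2)))
    (hA : A.Nonempty) (hB : B.Nonempty) (hAB : Disjoint A B)
    (hAc : IsClosed A) (hBc : IsClosed B)
    (x : EuclideanSpace ℝ (Fin 2)) (hx : x ∈ equidistantSet A B)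
    (n R : ℝ) (hn : 0 < n) (hR : 2 * n + Metric.infDist x A ≤ R) :
    equidistantSet A B ∩ Metric.closedBall x n =
      equidistantSet (A ∩ Metric.closedBall x R) (B ∩ Metric.closedBall x R)
        ∩ Metric.closedBall x n := by
  have hxB : Metric.infDist x B = Metric.infDist x A := hx.symm
  ext y
  simp only [Set.mem_inter_iff, Metric.mem_closedBall, equidistantSet, Set.mem_setOf_eq]
  constructor <;> rintro ⟨h1, h2⟩ <;> refine ⟨?_, h2⟩
  · rw [infDist_inter_closedBall_eq A hAc hA x y n R h2 hR,
      infDist_inter_closedBall_eq B hBc hB x y n R h2 (hxB ▸ hR)]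
    exact h1
  · rw [infDist_inter_closedBall_eq A hAc hA x y n R h2 hR,
      infDist_inter_closedBall_eq B hBc hB x y n R h2 (hxB ▸ hR)] at h1
    exact h1
end

section
/- Let A and B be nonempty disjoint compact subsets of the Euclidean plane ℝ². Then the 1-dimensional Hausdorff measure of the equidistant set E(A,B) is strictly positive, and for every x ∈ ℝ² and every r > 0 the 1-dimensional Hausdorff measure of E(A,B) ∩ closedBall(x,r) is finite. -/
/-!
Let `δ > 0` be a lower bound for the distances between points of `A` and of `B`.

Positivity: for `a ∈ A`, `b ∈ B` and a unit vector `u ⊥ b - a`, each segment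
`[a + s • u, b + s • u]` with `0 ≤ s` small runs from a point closer to `A` to a point closer
to `B`, so it meets `E(A, B)`; hence the 1-Lipschitz map `⟪u, ·⟫` sends `E(A, B)` onto an
interval.

Local finiteness: if `x ∈ E(A, B)` has nearest point `a ∈ A` at distance `d`, the points `x + w`
with `‖w‖ ≤ d` making a small angle (controlled by `δ / d`) with `a - x` are strictly closer to
`A` than to `B`, so `E(A, B)` avoids this cone. On a small piece of `E(A, B)` on which all the
directions `a - x` are nearly parallel to one unit vector `c`, every chord therefore makes a
definite angle with `c`: the piece is a Lipschitz graph over the line `c⊥` and has finite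
length. Finitely many such pieces cover `E(A, B) ∩ closedBall z r`.
-/

open Metric Set MeasureTheory
open scoped MeasureTheory

open Filter Topology Module
open scoped RealInnerProductSpace ENNReal NNReal

section HausdorffMeasure

variable {X : Type*} [MetricSpace X] [MeasurableSpace X] [BorelSpace X]

theorem hausdorffMeasure_one_pos_of_Icc_subset_image {S : Set X} {g : X → ℝ} {K : ℝ≥0}
    (hg : LipschitzWith K g) {s t : ℝ} (hst : s < t) (h : Icc s t ⊆ g '' S) :
    0 < μH[1] S := by
  have hIcc : 0 < μH[1] (Icc s t) := by
    simpa [hausdorffMeasure_real] using hst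
  have := (hIcc.trans_le (measure_mono h)).trans_le (hg.hausdorffMeasure_image_le zero_le_one S)
  exact pos_iff_ne_zero.2 fun h0 => by simp [h0] at this

theorem hausdorffMeasure_one_lt_top_of_le_mul_dist {S : Set X} {g : X → ℝ} {K : ℝ≥0}
    (hg : ∀ x ∈ S, ∀ y ∈ S, dist x y ≤ K * dist (g x) (g y))
    (hS : Bornology.IsBounded (g '' S)) :
    μH[1] S < ⊤ := by
  have hanti : AntilipschitzWith K (S.domRestrict g) :=
    AntilipschitzWith.of_le_mul_dist fun x y => hg x x.2 y y.2
  calc μH[1] S = μH[1] (univ : Set S) := by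
        rw [← (isometry_subtype_coe (s := S)).hausdorffMeasure_image (Or.inl zero_le_one),
          image_univ, Subtype.range_coe]
    _ ≤ (K : ℝ≥0∞) ^ (1 : ℝ) * μH[1] (S.domRestrict g '' univ) :=
        hanti.le_hausdorffMeasure_image zero_le_one _
    _ < ⊤ := by
        rw [image_univ, range_domRestrict, hausdorffMeasure_real]
        exact ENNReal.mul_lt_top (by simp) hS.measure_lt_top

end HausdorffMeasure

section Metric

variable {X : Type*} [MetricSpace X]

theorem IsCompact.exists_pos_forall_le_dist {s t : Set X} (hs : IsCompact s) (ht : IsClosed t)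
    (hst : Disjoint s t) : ∃ δ > 0, ∀ x ∈ s, ∀ y ∈ t, δ ≤ dist x y := by
  obtain ⟨δ, hδ, h⟩ := exists_pos_forall_lt_edist hs ht hst
  refine ⟨δ, hδ, fun x hx y hy => ?_⟩
  have := h x hx y hy
  rw [edist_nndist, ENNReal.coe_lt_coe] at this
  exact_mod_cast this.le

theorem infDist_le_infDist_of_dist_le {A B : Set X} {a p : X} {s : ℝ} (ha : a ∈ A)
    (hp : dist p a ≤ s) (hs : 2 * s ≤ infDist a B) : infDist p A ≤ infDist p B := by
  have hA : infDist p A ≤ dist p a := infDist_le_dist_of_mem ha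
  have hB : infDist a B ≤ infDist p B + dist a p := infDist_le_infDist_add_dist
  rw [dist_comm] at hB
  linarith

theorem le_two_mul_infDist_of_mem_equidistantSet {A B : Set X} (hA : A.Nonempty)
    (hB : B.Nonempty) {δ : ℝ} (hδ : ∀ a ∈ A, ∀ b ∈ B, δ ≤ dist a b) {x : X}
    (hx : x ∈ equidistantSet A B) : δ ≤ 2 * infDist x A := by
  have h : ∀ b ∈ B, δ - infDist x A ≤ dist x b := fun b hb => by
    have : δ - dist x b ≤ infDist x A := (le_infDist hA).2 fun a ha => by
      linarith [hδ a ha b hb, dist_triangle a x b, dist_comm a x]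
    linarith
  have := (le_infDist hB).2 h
  rw [← hx] at this
  linarith

end Metric

section InnerProductSpace

variable {F : Type*} [NormedAddCommGroup F] [InnerProductSpace ℝ F]

theorem dist_add_sq_sub_dist_add_sq (x w a b : F) :
    dist (x + w) b ^ 2 - dist (x + w) a ^ 2 = dist x b ^ 2 - dist x a ^ 2 + 2 * ⟪w, a - b⟫ := by
  have h (c : F) : dist (x + w) c ^ 2 = ‖w‖ ^ 2 - 2 * ⟪w, c - x⟫ + dist x c ^ 2 := by
    rw [dist_eq_norm, show x + w - c = w - (c - x) by abel, norm_sub_sq_real, ← dist_eq_norm,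
      dist_comm]
  have hab : ⟪w, a - b⟫ = ⟪w, a - x⟫ - ⟪w, b - x⟫ := by
    rw [← inner_sub_right, sub_sub_sub_cancel_right]
  rw [h a, h b, hab]
  ring

theorem norm_sq_smul_sub_inner_smul (v w : F) :
    ‖‖v‖ ^ 2 • w - ⟪w, v⟫ • v‖ ^ 2 = ‖v‖ ^ 2 * (‖v‖ ^ 2 * ‖w‖ ^ 2 - ⟪w, v⟫ ^ 2) := by
  rw [norm_sub_sq_real, norm_smul, norm_smul, real_inner_smul_left, real_inner_smul_right,
    Real.norm_of_nonneg (by positivity), Real.norm_eq_abs, mul_pow, mul_pow, sq_abs]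
  ring

theorem inner_le_of_dist_le_dist {x a b w : F} {κ : ℝ} (hκ : 0 < κ)
    (hxab : dist x a ≤ dist x b) (hw : ‖w‖ ≤ dist x a)
    (hκab : 4 * (1 - κ ^ 2) * dist x a ^ 2 ≤ κ ^ 2 * dist a b ^ 2)
    (h : dist (x + w) b ≤ dist (x + w) a) :
    ⟪w, a - x⟫ ≤ κ * ‖w‖ * dist x a := by
  by_contra! hcone
  have he := norm_sq_smul_sub_inner_smul (a - x) w
  have hcos := norm_sub_sq_real (a - x) (a - b)
  have hd : ‖a - x‖ = dist x a := by rw [← dist_eq_norm, dist_comm]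
  rw [sub_sub_sub_cancel_left, ← dist_eq_norm a b, ← dist_eq_norm b x, dist_comm b, hd] at hcos
  rw [hd] at he
  set d := dist x a
  set L := dist a b
  set p := ⟪w, a - x⟫
  have hpd : p ≤ ‖w‖ * d := hd ▸ real_inner_le_norm w (a - x)
  have hp : 0 < p := lt_of_le_of_lt (by positivity) hcone
  have hd0 : 0 < d := pos_of_mul_pos_right (hp.trans_le hpd) (norm_nonneg w)
  -- `e` is `d²` times the component of `w` orthogonal to `a - x`
  set e := d ^ 2 • w - p • (a - x)
  have hea : ⟪e, a - b⟫ = d ^ 2 * ⟪w, a - b⟫ - p * ⟪a - x, a - b⟫ := by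
    simp only [e, inner_sub_left, real_inner_smul_left]
  have hcs : -(‖e‖ * L) ≤ ⟪e, a - b⟫ := by
    have := abs_real_inner_le_norm e (a - b)
    rw [← dist_eq_norm a b] at this
    exact neg_le_of_abs_le this
  have he_lt : 2 * ‖e‖ < p * L := by
    have hκp : 4 * d ^ 2 * (κ * ‖w‖ * d) ^ 2 < 4 * d ^ 2 * p ^ 2 := by gcongr
    have hsq : κ ^ 2 * (2 * ‖e‖) ^ 2 < κ ^ 2 * (p * L) ^ 2 := by
      nlinarith [mul_le_mul_of_nonneg_right hκab (sq_nonneg p)]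
    exact (pow_lt_pow_iff_left₀ (by positivity) (by positivity) two_ne_zero).1
      (lt_of_mul_lt_mul_left hsq (by positivity))
  have hL : 0 < L := pos_of_mul_pos_right ((by positivity : (0 : ℝ) ≤ 2 * ‖e‖).trans_lt he_lt) hp.le
  have hm : d ^ 2 ≤ dist x b ^ 2 := by gcongr
  have hpd2 : p ≤ d ^ 2 := hpd.trans (by nlinarith)
  have hgap : 0 < d ^ 2 * (dist (x + w) b ^ 2 - dist (x + w) a ^ 2) := by
    rw [dist_add_sq_sub_dist_add_sq]
    nlinarith [mul_nonneg (sub_nonneg.2 hpd2) (sub_nonneg.2 hm), mul_lt_mul_of_pos_right he_lt hL]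
  have := pos_of_mul_pos_right hgap (by positivity)
  exact absurd h (not_le.2 (lt_of_pow_lt_pow_left₀ 2 dist_nonneg (by linarith)))

theorem inner_le_of_mem_equidistantSet {A B : Set F} (hA : A.Nonempty) (hBc : IsCompact B)
    (hB : B.Nonempty) {δ κ D : ℝ} (hδ : ∀ a ∈ A, ∀ b ∈ B, δ ≤ dist a b) (hκ0 : 0 < κ)
    (hκ1 : κ ≤ 1) (hκD : 4 * (1 - κ ^ 2) * D ^ 2 ≤ κ ^ 2 * δ ^ 2) {x y a : F}
    (hx : x ∈ equidistantSet A B) (hy : y ∈ equidistantSet A B) (ha : a ∈ A)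
    (hxa : dist x a = infDist x A) (hxD : dist x a ≤ D) (hxy : dist x y ≤ δ / 2) :
    ⟪y - x, ‖a - x‖⁻¹ • (a - x)⟫ ≤ κ * dist x y := by
  obtain ⟨b, hb, hyb⟩ := hBc.exists_infDist_eq_dist hB y
  have hxb : dist x a ≤ dist x b := by
    rw [hxa, hx]
    exact infDist_le_dist_of_mem hb
  have hab : 4 * (1 - κ ^ 2) * dist x a ^ 2 ≤ κ ^ 2 * dist a b ^ 2 := by
    have : 0 ≤ 1 - κ ^ 2 := by nlinarith
    have : 0 ≤ δ := by linarith [dist_nonneg (x := x) (y := y)]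
    grw [hxD, hκD, hδ a ha b hb]
  have hyb' : dist (x + (y - x)) b ≤ dist (x + (y - x)) a := by
    rw [add_sub_cancel, ← hyb, ← hy]
    exact infDist_le_dist_of_mem ha
  have hyx : ‖y - x‖ = dist x y := by rw [← dist_eq_norm, dist_comm]
  have hxy' : ‖y - x‖ ≤ dist x a := by
    linarith [le_two_mul_infDist_of_mem_equidistantSet hA hB hδ hx]
  have key := inner_le_of_dist_le_dist hκ0 hxb hxy' hab hyb'
  rw [hyx] at key
  rw [real_inner_smul_right, ← dist_eq_norm, dist_comm]
  rcases (dist_nonneg (x := x) (y := a)).eq_or_lt with hd | hd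
  · rw [← hd, inv_zero, zero_mul]
    positivity
  · rwa [inv_mul_le_iff₀ hd, mul_comm (dist x a)]

theorem exists_mem_equidistantSet_inner_eq {A B : Set F} {a b u : F} (ha : a ∈ A) (hb : b ∈ B)
    (hu : ‖u‖ = 1) (hbu : ⟪u, b - a⟫ = 0) {s : ℝ} (hs : 0 ≤ s) (hsa : 2 * s ≤ infDist a B)
    (hsb : 2 * s ≤ infDist b A) :
    ∃ y ∈ equidistantSet A B, ⟪u, y⟫ = ⟪u, a⟫ + s := by
  have hdist : ∀ c : F, dist (c + s • u) c = s := fun c => by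
    rw [dist_eq_norm, add_sub_cancel_left, norm_smul, hu, mul_one, Real.norm_of_nonneg hs]
  let f : F → ℝ := fun y => infDist y A - infDist y B
  have hf : Continuous f := (continuous_infDist_pt A).sub (continuous_infDist_pt B)
  have hfa : f (a + s • u) ≤ 0 :=
    sub_nonpos.2 (infDist_le_infDist_of_dist_le ha (hdist a).le hsa)
  have hfb : 0 ≤ f (b + s • u) :=
    sub_nonneg.2 (infDist_le_infDist_of_dist_le hb (hdist b).le hsb)
  obtain ⟨y, hy, hfy⟩ := (convex_segment (a + s • u) (b + s • u)).isPreconnected.intermediate_value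
    (left_mem_segment ℝ _ _) (right_mem_segment ℝ _ _) hf.continuousOn ⟨hfa, hfb⟩
  have hline : segment ℝ (a + s • u) (b + s • u) ⊆ {z | ⟪u, z⟫ = ⟪u, a⟫ + s} := by
    refine (convex_hyperplane (innerₗ F u).isLinear _).segment_subset ?_ ?_
    · simp [inner_add_right, real_inner_smul_right, hu]
    · have : ⟪u, b⟫ = ⟪u, a⟫ := by rwa [inner_sub_right, sub_eq_zero] at hbu
      simp [inner_add_right, real_inner_smul_right, hu, this]
  exact ⟨y, sub_eq_zero.1 hfy, hline hy⟩

variable [MeasurableSpace F] [BorelSpace F]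

theorem hausdorffMeasure_equidistantSet_pos {A B : Set F} (hA : IsClosed A) (hB : IsClosed B)
    (hAB : Disjoint A B) {a b u : F} (ha : a ∈ A) (hb : b ∈ B) (hu : ‖u‖ = 1)
    (hbu : ⟪u, b - a⟫ = 0) : 0 < μH[1] (equidistantSet A B) := by
  have haB : 0 < infDist a B := (hB.notMem_iff_infDist_pos ⟨b, hb⟩).1 (hAB.notMem_of_mem_left ha)
  have hbA : 0 < infDist b A := (hA.notMem_iff_infDist_pos ⟨a, ha⟩).1 (hAB.notMem_of_mem_right hb)
  set η := min (infDist a B) (infDist b A) / 2 with hη_def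
  have hη : 0 < η := by positivity
  refine hausdorffMeasure_one_pos_of_Icc_subset_image (innerSL ℝ u).lipschitz
    (lt_add_of_pos_right ⟪u, a⟫ hη) fun t ht => ?_
  obtain ⟨y, hy, hyt⟩ := exists_mem_equidistantSet_inner_eq ha hb hu hbu (s := t - ⟪u, a⟫)
    (by linarith [ht.1]) (by linarith [ht.2, hη_def, min_le_left (infDist a B) (infDist b A)])
    (by linarith [ht.2, hη_def, min_le_right (infDist a B) (infDist b A)])
  exact ⟨y, hy, by rw [innerSL_apply_apply, hyt]; ring⟩

end InnerProductSpace

section Plane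

variable {F : Type*} [NormedAddCommGroup F] [InnerProductSpace ℝ F] [Fact (finrank ℝ F = 2)]

attribute [local instance] FiniteDimensional.of_fact_finrank_eq_two

theorem exists_norm_eq_one_inner_eq_zero {v : F} (hv : v ≠ 0) :
    ∃ u : F, ‖u‖ = 1 ∧ ⟪u, v⟫ = 0 := by
  let o : Orientation ℝ F (Fin 2) := (finBasisOfFinrankEq ℝ F Fact.out).orientation
  refine ⟨‖v‖⁻¹ • o.rightAngleRotation v, ?_, ?_⟩
  · rw [norm_smul, LinearIsometryEquiv.norm_map, norm_inv, norm_norm,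
      inv_mul_cancel₀ (norm_ne_zero_iff.2 hv)]
  · rw [real_inner_smul_left, o.inner_rightAngleRotation_self, mul_zero]

variable [MeasurableSpace F] [BorelSpace F]

theorem hausdorffMeasure_one_lt_top_of_abs_inner_le {S : Set F} (hS : Bornology.IsBounded S)
    {c : F} (hc : ‖c‖ = 1) {β : ℝ} (hβ0 : 0 ≤ β) (hβ1 : β < 1)
    (h : ∀ x ∈ S, ∀ y ∈ S, |⟪y - x, c⟫| ≤ β * dist x y) : μH[1] S < ⊤ := by
  let o : Orientation ℝ F (Fin 2) := (finBasisOfFinrankEq ℝ F Fact.out).orientation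
  let g : F →ₗ[ℝ] ℝ := o.areaForm c
  have hγ : 0 < √(1 - β ^ 2) := Real.sqrt_pos.2 (by nlinarith)
  refine hausdorffMeasure_one_lt_top_of_le_mul_dist (g := g) (K := (√(1 - β ^ 2))⁻¹.toNNReal)
    (fun x hx y hy => ?_) ((LinearMap.toContinuousLinearMap g).lipschitz.isBounded_image hS)
  have hxy : ‖y - x‖ = dist x y := by rw [← dist_eq_norm, dist_comm]
  have hpar : ⟪c, y - x⟫ ^ 2 + (g y - g x) ^ 2 = dist x y ^ 2 := by
    rw [← map_sub, ← hxy, ← one_mul (‖y - x‖ ^ 2), ← one_pow 2, ← hc]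
    exact o.inner_sq_add_areaForm_sq c (y - x)
  have hcos : ⟪c, y - x⟫ ^ 2 ≤ (β * dist x y) ^ 2 := by
    rw [real_inner_comm, ← sq_abs]
    exact pow_le_pow_left₀ (abs_nonneg _) (h x hx y hy) 2
  have hsin : (√(1 - β ^ 2) * dist x y) ^ 2 ≤ dist (g x) (g y) ^ 2 := by
    rw [mul_pow, Real.sq_sqrt (by nlinarith), Real.dist_eq, sq_abs]
    nlinarith
  rw [Real.coe_toNNReal _ (by positivity), inv_mul_eq_div, le_div_iff₀' hγ]
  exact (pow_le_pow_iff_left₀ (by positivity) dist_nonneg two_ne_zero).1 hsin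

theorem hausdorffMeasure_one_lt_top_of_forall_exists_inner_le {S : Set F}
    (hS : Bornology.IsBounded S) {c : F} (hc : ‖c‖ = 1) {κ ρ : ℝ} (hκ : 0 ≤ κ) (hρ : 0 ≤ ρ)
    (hκρ : κ + ρ < 1)
    (h : ∀ x ∈ S, ∃ u, dist u c ≤ ρ ∧ ∀ y ∈ S, ⟪y - x, u⟫ ≤ κ * dist x y) :
    μH[1] S < ⊤ := by
  have hchord : ∀ x ∈ S, ∀ y ∈ S, ⟪y - x, c⟫ ≤ (κ + ρ) * dist x y := by
    intro x hx y hy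
    obtain ⟨u, huc, hu⟩ := h x hx
    have hcu : ⟪y - x, c - u⟫ ≤ dist x y * ρ := by
      refine (real_inner_le_norm _ _).trans ?_
      rw [← dist_eq_norm, ← dist_eq_norm, dist_comm, dist_comm c]
      gcongr
    calc ⟪y - x, c⟫ = ⟪y - x, u⟫ + ⟪y - x, c - u⟫ := by rw [← inner_add_right, add_sub_cancel]
      _ ≤ (κ + ρ) * dist x y := by linarith [hu y hy]
  refine hausdorffMeasure_one_lt_top_of_abs_inner_le hS hc (by positivity) hκρ
    fun x hx y hy => abs_le.2 ⟨?_, hchord x hx y hy⟩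
  have := hchord y hy x hx
  rw [dist_comm, ← neg_sub, inner_neg_left] at this
  linarith

theorem exists_mem_Ioo_four_mul_one_sub_sq_mul_sq_le (D : ℝ) {δ : ℝ} (hδ : δ ≠ 0) :
    ∃ κ ∈ Ioo (0 : ℝ) 1, 4 * (1 - κ ^ 2) * D ^ 2 ≤ κ ^ 2 * δ ^ 2 := by
  have hcont : Continuous fun κ : ℝ => κ ^ 2 * δ ^ 2 - 4 * (1 - κ ^ 2) * D ^ 2 := by fun_prop
  have hpos := (hcont.tendsto 1).eventually (lt_mem_nhds (show (0 : ℝ) < _ by simp; positivity))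
  have hnear : ∀ᶠ κ in 𝓝 (1 : ℝ), 0 < κ ∧ 4 * (1 - κ ^ 2) * D ^ 2 ≤ κ ^ 2 * δ ^ 2 :=
    (eventually_gt_nhds one_pos).and (hpos.mono fun κ h => (sub_pos.1 h).le)
  obtain ⟨κ, ⟨hκ0, hκ⟩, hκ1⟩ := Eventually.exists (f := 𝓝[<] (1 : ℝ))
    ((hnear.filter_mono nhdsWithin_le_nhds).and eventually_mem_nhdsWithin)
  exact ⟨κ, ⟨hκ0, hκ1⟩, hκ⟩

theorem hausdorffMeasure_equidistantSet_inter_closedBall_lt_top {A B : Set F} (hA : A.Nonempty)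
    (hB : B.Nonempty) (hAB : Disjoint A B) (hAc : IsCompact A) (hBc : IsCompact B) (z : F)
    (r : ℝ) : μH[1] (equidistantSet A B ∩ closedBall z r) < ⊤ := by
  obtain ⟨δ, hδ0, hδ⟩ := hAc.exists_pos_forall_le_dist hBc.isClosed hAB
  obtain ⟨κ, ⟨hκ0, hκ1⟩, hκD⟩ :=
    exists_mem_Ioo_four_mul_one_sub_sq_mul_sq_le (infDist z A + r) hδ0.ne'
  obtain ⟨ρ, hρ0, hκρ⟩ : ∃ ρ, 0 < ρ ∧ κ + ρ < 1 := ⟨(1 - κ) / 2, by linarith, by linarith⟩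
  obtain ⟨T, hTs, hTfin, hTcov⟩ := (isCompact_sphere (0 : F) 1).finite_cover_balls hρ0
  obtain ⟨P, -, hPfin, hPcov⟩ :=
    (isCompact_closedBall z r).finite_cover_balls (e := δ / 4) (by positivity)
  let piece (c p : F) : Set F :=
    {x ∈ equidistantSet A B ∩ closedBall z r |
      ∃ a ∈ A, dist x a = infDist x A ∧ dist (‖a - x‖⁻¹ • (a - x)) c < ρ} ∩ ball p (δ / 4)
  have hcover : equidistantSet A B ∩ closedBall z r ⊆ ⋃ c ∈ T, ⋃ p ∈ P, piece c p := by
    intro x hx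
    obtain ⟨a, ha, hxa⟩ := hAc.exists_infDist_eq_dist hA x
    have hax : a - x ≠ 0 := by
      rw [sub_ne_zero]
      rintro rfl
      linarith [le_two_mul_infDist_of_mem_equidistantSet hA hB hδ hx.1, hxa, dist_self a]
    obtain ⟨c, hc, hxc⟩ :=
      mem_iUnion₂.1 (hTcov (mem_sphere_zero_iff_norm.2 (norm_smul_inv_norm (𝕜 := ℝ) hax)))
    obtain ⟨p, hp, hxp⟩ := mem_iUnion₂.1 (hPcov hx.2)
    exact mem_iUnion₂.2 ⟨c, hc, mem_iUnion₂.2 ⟨p, hp, ⟨hx, a, ha, hxa.symm, hxc⟩, hxp⟩⟩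
  refine (measure_mono hcover).trans_lt (measure_biUnion_lt_top hTfin fun c hc =>
    measure_biUnion_lt_top hPfin fun p _ => ?_)
  refine hausdorffMeasure_one_lt_top_of_forall_exists_inner_le
    (isBounded_ball.subset inter_subset_right) (mem_sphere_zero_iff_norm.1 (hTs hc)) hκ0.le
    hρ0.le hκρ ?_
  rintro x ⟨⟨⟨hx, hxz⟩, a, ha, hxa, hac⟩, hxp⟩
  refine ⟨_, hac.le, ?_⟩
  rintro y ⟨⟨⟨hy, -⟩, -⟩, hyp⟩
  refine inner_le_of_mem_equidistantSet hA hBc hB hδ hκ0 hκ1.le hκD hx hy ha hxa ?_ ?_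
  · rw [hxa]
    exact (infDist_le_infDist_add_dist (y := z)).trans (by linarith [mem_closedBall.1 hxz])
  · linarith [dist_triangle_right x y p, mem_ball.1 hxp, mem_ball.1 hyp]

end Plane

/-- For nonempty disjoint compact subsets `A`, `B` of the Euclidean plane, the
1-dimensional Hausdorff measure of `E(A,B)` is strictly positive, and its intersection
with any closed ball of positive radius has finite 1-dimensional Hausdorff measure. -/
theorem hausdorffMeasure_equidistantSet
    (A B : Set (EuclideanSpace ℝ (Fin 2)))
    (hA : A.Nonempty) (hB : B.Nonempty) (hAB : Disjoint A B)
    (hAcpt : IsCompact A) (hBcpt : IsCompact B) :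
    0 < μH[1] (equidistantSet A B) ∧
      ∀ (x : EuclideanSpace ℝ (Fin 2)) (r : ℝ), 0 < r →
        μH[1] (equidistantSet A B ∩ Metric.closedBall x r) < ⊤ := by
  have : Fact (finrank ℝ (EuclideanSpace ℝ (Fin 2)) = 2) := ⟨finrank_euclideanSpace_fin⟩
  obtain ⟨a, ha⟩ := hA
  obtain ⟨b, hb⟩ := hB
  obtain ⟨u, hu, hbu⟩ := exists_norm_eq_one_inner_eq_zero (sub_ne_zero.2 (hAB.ne_of_mem ha hb).symm)
  exact ⟨hausdorffMeasure_equidistantSet_pos hAcpt.isClosed hBcpt.isClosed hAB ha hb hu hbu,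
    fun x r _ => hausdorffMeasure_equidistantSet_inter_closedBall_lt_top ⟨a, ha⟩ ⟨b, hb⟩ hAB
      hAcpt hBcpt x r⟩
end
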